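/- arXiv:1504.07972 — 5 statements merged into one kernel-verified Lean document; each statement's English description precedes it below -/
import Mathlib

section
/- Let λ_{j,n} for j = 1,…,n satisfy δ₁ n/j^m ≤ λ_{j,n} ≤ δ₂ n/j^m for constants 0 < δ₁ ≤ δ₂ and m ≥ 1. Then D₂(c) := Σ_{j=1}^n (cλ_{j,n})²/(1+cλ_{j,n})² satisfies D₂(c) ≍ (cn)^{1/m} uniformly for c ∈ [log n / n, n^{m-1}] as n → ∞; i.e. there are constants 0 < k ≤ K independent of n and c such that k (cn)^{1/m} ≤ D₂(c) ≤ K (cn)^{1/m} for all such c and sufficiently large n. -/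
/-!
Put `T = (cn)^{1/m}`, so that `cλ_{j,n} ≍ (T/j)^m`. The condition `c ≥ log n / n` gives `T ≥ 1`
and `c ≤ n^{m-1}` gives `T ≤ n`. The `⌊T⌋ ≥ T/2` indices `j ≤ T` have `cλ_{j,n} ≥ δ₁`, so each
of their terms lies between `(δ₁/(1+δ₁))²` and `1`. For `j > T` the term is at most
`(cλ_{j,n})² ≤ δ₂² T^{2m} j^{-2m}`, and comparing the sum with `∫_{⌊T⌋}^∞ x^{-2m} dx` bounds the
tail by a multiple of `T^{2m} ⌊T⌋^{1-2m} ≤ 2^{2m-1} T`.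
-/

open Finset

lemma sq_div_one_add_sq_le_sq_div_one_add_sq {a x : ℝ} (ha : 0 ≤ a) (hax : a ≤ x) :
    a ^ 2 / (1 + a) ^ 2 ≤ x ^ 2 / (1 + x) ^ 2 := by
  rw [← div_pow, ← div_pow]
  refine pow_le_pow_left₀ (by positivity) ?_ 2
  rw [div_le_div_iff₀ (by linarith) (by linarith)]
  linarith

lemma sq_div_one_add_sq_le_one {x : ℝ} (hx : 0 ≤ x) : x ^ 2 / (1 + x) ^ 2 ≤ 1 :=
  div_le_one_of_le₀ (by gcongr; linarith) (by positivity)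

lemma sq_div_one_add_sq_le_sq {x : ℝ} (hx : 0 ≤ x) : x ^ 2 / (1 + x) ^ 2 ≤ x ^ 2 :=
  div_le_self (by positivity) (one_le_pow₀ (by linarith))

lemma half_le_floor {T : ℝ} (hT : 1 ≤ T) : T / 2 ≤ ⌊T⌋₊ := by
  have h1 : (1 : ℝ) ≤ ⌊T⌋₊ := by exact_mod_cast Nat.one_le_floor_iff T |>.mpr hT
  linarith [Nat.lt_floor_add_one T]

lemma sum_Ioc_rpow_neg_le {s : ℝ} (hs : 1 < s) {J n : ℕ} (hJ : 1 ≤ J) (hJn : J ≤ n) :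
    ∑ j ∈ Ioc J n, (j : ℝ) ^ (-s) ≤ (J : ℝ) ^ (1 - s) / (s - 1) := by
  have hJ0 : (0 : ℝ) < J := by exact_mod_cast hJ
  have hzero : (0 : ℝ) ∉ Set.uIcc (J : ℝ) n := by
    rw [Set.uIcc_of_le (by exact_mod_cast hJn)]
    exact fun h => hJ0.not_ge h.1
  calc ∑ j ∈ Ioc J n, (j : ℝ) ^ (-s) = ∑ i ∈ Ico J n, ((i + 1 : ℕ) : ℝ) ^ (-s) := by
        rw [← Ico_add_one_add_one_eq_Ioc, ← sum_Ico_add']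
    _ ≤ ∫ x in (J : ℝ)..n, x ^ (-s) :=
        AntitoneOn.sum_le_integral_Ico hJn fun x hx y _ hxy =>
          Real.rpow_le_rpow_of_nonpos (hJ0.trans_le hx.1) hxy (by linarith)
    _ = ((J : ℝ) ^ (1 - s) - (n : ℝ) ^ (1 - s)) / (s - 1) := by
        rw [integral_rpow (Or.inr ⟨by linarith, hzero⟩), neg_add_eq_sub,
          ← neg_sub s 1, div_neg, ← neg_div, neg_sub]
    _ ≤ (J : ℝ) ^ (1 - s) / (s - 1) := by
        gcongr
        exact sub_le_self _ (by positivity)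

lemma rpow_div_sq_eq {T y m : ℝ} (hT : 0 ≤ T) (hy : 0 ≤ y) :
    ((T / y) ^ m) ^ 2 = T ^ (2 * m) * y ^ (-(2 * m)) := by
  rw [← Real.rpow_natCast, ← Real.rpow_mul (by positivity), Real.div_rpow hT hy,
    Real.rpow_neg hy, div_eq_mul_inv, mul_comm m]
  norm_num

section PolynomialDecay

variable {m T : ℝ} {n : ℕ} {x : ℕ → ℝ}

lemma le_sum_sq_div_one_add_sq {a : ℝ} (hm : 0 ≤ m) (ha : 0 < a) (hT : 1 ≤ T) (hTn : T ≤ n)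
    (hx : ∀ j ∈ Icc 1 n, a * (T / j) ^ m ≤ x j) :
    a ^ 2 / (1 + a) ^ 2 / 2 * T ≤ ∑ j ∈ Icc 1 n, x j ^ 2 / (1 + x j) ^ 2 := by
  set J := ⌊T⌋₊
  have hJn : J ≤ n := Nat.floor_le_of_le hTn
  have head : ∀ j ∈ Icc 1 J, a ^ 2 / (1 + a) ^ 2 ≤ x j ^ 2 / (1 + x j) ^ 2 := by
    intro j hj
    have hj1 : (1 : ℝ) ≤ j := by exact_mod_cast (mem_Icc.1 hj).1
    have hjT : (j : ℝ) ≤ T :=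
      (Nat.cast_le.2 (mem_Icc.1 hj).2).trans (Nat.floor_le (by linarith))
    have hTj : 1 ≤ (T / j) ^ m := Real.one_le_rpow ((one_le_div₀ (by linarith)).2 hjT) hm
    refine sq_div_one_add_sq_le_sq_div_one_add_sq ha.le
      (le_trans ?_ (hx j (Icc_subset_Icc_right hJn hj)))
    nlinarith
  calc a ^ 2 / (1 + a) ^ 2 / 2 * T ≤ J * (a ^ 2 / (1 + a) ^ 2) := by
        nlinarith [half_le_floor hT, show 0 ≤ a ^ 2 / (1 + a) ^ 2 by positivity]
    _ = ∑ _j ∈ Icc 1 J, a ^ 2 / (1 + a) ^ 2 := by simp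
    _ ≤ ∑ j ∈ Icc 1 J, x j ^ 2 / (1 + x j) ^ 2 := sum_le_sum head
    _ ≤ ∑ j ∈ Icc 1 n, x j ^ 2 / (1 + x j) ^ 2 :=
        sum_le_sum_of_subset_of_nonneg (Icc_subset_Icc_right hJn) fun j _ _ => by positivity

lemma sum_sq_div_one_add_sq_le {b : ℝ} (hm : 1 / 2 < m) (hT : 1 ≤ T) (hTn : T ≤ n)
    (hx0 : ∀ j ∈ Icc 1 n, 0 ≤ x j) (hx : ∀ j ∈ Icc 1 n, x j ≤ b * (T / j) ^ m) :
    ∑ j ∈ Icc 1 n, x j ^ 2 / (1 + x j) ^ 2 ≤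
      (1 + b ^ 2 * 2 ^ (2 * m - 1) / (2 * m - 1)) * T := by
  set J := ⌊T⌋₊
  have hJn : J ≤ n := Nat.floor_le_of_le hTn
  have hJ1 : 1 ≤ J := Nat.one_le_floor_iff T |>.mpr hT
  have hT0 : 0 < T := by linarith
  have head : ∑ j ∈ Ioc 0 J, x j ^ 2 / (1 + x j) ^ 2 ≤ T :=
    calc ∑ j ∈ Ioc 0 J, x j ^ 2 / (1 + x j) ^ 2 ≤ ∑ _j ∈ Ioc 0 J, (1 : ℝ) :=
          sum_le_sum fun j hj => sq_div_one_add_sq_le_one (hx0 j (by simp at hj ⊢; omega))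
      _ ≤ T := by simpa using Nat.floor_le hT0.le
  have tail : ∑ j ∈ Ioc J n, x j ^ 2 / (1 + x j) ^ 2 ≤
      b ^ 2 * 2 ^ (2 * m - 1) / (2 * m - 1) * T := by
    have hterm : ∀ j ∈ Ioc J n,
        x j ^ 2 / (1 + x j) ^ 2 ≤ b ^ 2 * T ^ (2 * m) * (j : ℝ) ^ (-(2 * m)) := by
      intro j hj
      have hj : j ∈ Icc 1 n := by simp at hj ⊢; omega
      calc x j ^ 2 / (1 + x j) ^ 2 ≤ x j ^ 2 := sq_div_one_add_sq_le_sq (hx0 j hj)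
        _ ≤ (b * (T / j) ^ m) ^ 2 := pow_le_pow_left₀ (hx0 j hj) (hx j hj) 2
        _ = _ := by rw [mul_pow, rpow_div_sq_eq hT0.le (by positivity), mul_assoc]
    have hJT : (J : ℝ) ^ (1 - 2 * m) ≤ (T / 2) ^ (1 - 2 * m) :=
      Real.rpow_le_rpow_of_nonpos (by positivity) (half_le_floor hT) (by linarith)
    have hTT : T ^ (2 * m) * (T / 2) ^ (1 - 2 * m) = 2 ^ (2 * m - 1) * T := by
      rw [Real.div_rpow hT0.le zero_le_two, ← mul_div_assoc, ← Real.rpow_add hT0,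
        show 2 * m + (1 - 2 * m) = 1 by ring, Real.rpow_one, ← neg_sub,
        Real.rpow_neg zero_le_two, div_inv_eq_mul, mul_comm]
    calc ∑ j ∈ Ioc J n, x j ^ 2 / (1 + x j) ^ 2
        ≤ b ^ 2 * T ^ (2 * m) * ∑ j ∈ Ioc J n, (j : ℝ) ^ (-(2 * m)) := by
          rw [mul_sum]; exact sum_le_sum hterm
      _ ≤ b ^ 2 * T ^ (2 * m) * ((T / 2) ^ (1 - 2 * m) / (2 * m - 1)) := by
          gcongr
          exact (sum_Ioc_rpow_neg_le (by linarith) hJ1 hJn).trans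
            (div_le_div_of_nonneg_right hJT (by linarith))
      _ = b ^ 2 * 2 ^ (2 * m - 1) / (2 * m - 1) * T := by
          linear_combination b ^ 2 / (2 * m - 1) * hTT
  have hIcc : Icc 1 n = Ioc 0 n := Icc_add_one_left_eq_Ioc 0 n
  rw [hIcc, ← sum_Ioc_consecutive _ (Nat.zero_le J) hJn, add_mul, one_mul]
  exact add_le_add head tail

theorem sum_sq_div_one_add_sq_bounds {a b : ℝ} (hm : 1 / 2 < m) (ha : 0 < a) (hT : 1 ≤ T)
    (hTn : T ≤ n) (hx : ∀ j ∈ Icc 1 n, a * (T / j) ^ m ≤ x j ∧ x j ≤ b * (T / j) ^ m) :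
    a ^ 2 / (1 + a) ^ 2 / 2 * T ≤ ∑ j ∈ Icc 1 n, x j ^ 2 / (1 + x j) ^ 2 ∧
      ∑ j ∈ Icc 1 n, x j ^ 2 / (1 + x j) ^ 2 ≤
        (1 + b ^ 2 * 2 ^ (2 * m - 1) / (2 * m - 1)) * T := by
  have hx0 : ∀ j ∈ Icc 1 n, 0 ≤ x j := fun j hj =>
    le_trans (by have := (mem_Icc.1 hj).1; positivity) (hx j hj).1
  exact ⟨le_sum_sq_div_one_add_sq (by linarith) ha hT hTn fun j hj => (hx j hj).1,
    sum_sq_div_one_add_sq_le hm hT hTn hx0 fun j hj => (hx j hj).2⟩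

end PolynomialDecay

lemma mul_mul_div_rpow_eq_mul_rpow_div_rpow {m : ℝ} (hm : m ≠ 0) {c y : ℝ} (hcy : 0 ≤ c * y)
    (δ : ℝ) {j : ℝ} (hj : 0 ≤ j) : c * (δ * y / j ^ m) = δ * ((c * y) ^ (1 / m) / j) ^ m := by
  rw [Real.div_rpow (by positivity) hj, ← Real.rpow_mul hcy, one_div_mul_cancel hm, Real.rpow_one]
  ring

lemma mul_rpow_one_div_le {m c y : ℝ} (hm : 0 < m) (hy : 0 < y) (hc0 : 0 ≤ c)
    (hc : c ≤ y ^ (m - 1)) : (c * y) ^ (1 / m) ≤ y := by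
  have hcy : c * y ≤ y ^ m := by
    calc c * y ≤ y ^ (m - 1) * y := by gcongr
      _ = y ^ m := by rw [← Real.rpow_add_one hy.ne']; ring_nf
  simpa [← Real.rpow_mul hy.le, hm.ne'] using
    Real.rpow_le_rpow (by positivity) hcy (by positivity : 0 ≤ 1 / m)

lemma one_le_log_natCast {n : ℕ} (hn : 3 ≤ n) : 1 ≤ Real.log n := by
  rw [Real.le_log_iff_exp_le (by positivity)]
  exact Real.exp_one_lt_three.le.trans (by exact_mod_cast hn)

theorem variance_function_order_risk_general
    (m : ℝ) (hm : 1 ≤ m) (δ₁ δ₂ : ℝ) (hδ₁ : 0 < δ₁)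
    (lam : ℕ → ℕ → ℝ)
    (hlam : ∀ n j : ℕ, 1 ≤ j → j ≤ n →
      δ₁ * n / (j : ℝ) ^ m ≤ lam n j ∧ lam n j ≤ δ₂ * n / (j : ℝ) ^ m) :
    ∃ k K : ℝ, 0 < k ∧ k ≤ K ∧ ∃ N : ℕ, ∀ n : ℕ, N ≤ n → ∀ c : ℝ,
      Real.log n / n ≤ c → c ≤ (n : ℝ) ^ (m - 1) →
      k * (c * n) ^ (1 / m) ≤
        (∑ j ∈ Finset.Icc 1 n, (c * lam n j) ^ 2 / (1 + c * lam n j) ^ 2) ∧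
      (∑ j ∈ Finset.Icc 1 n, (c * lam n j) ^ 2 / (1 + c * lam n j) ^ 2) ≤
        K * (c * n) ^ (1 / m) := by
  have hm0 : 0 < m := by linarith
  refine ⟨δ₁ ^ 2 / (1 + δ₁) ^ 2 / 2, 1 + δ₂ ^ 2 * 2 ^ (2 * m - 1) / (2 * m - 1), by positivity,
    ?_, 3, fun n hn c hc hc' => ?_⟩
  · have : δ₁ ^ 2 / (1 + δ₁) ^ 2 ≤ 1 := sq_div_one_add_sq_le_one hδ₁.le
    have : 0 ≤ δ₂ ^ 2 * 2 ^ (2 * m - 1) / (2 * m - 1) := div_nonneg (by positivity) (by linarith)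
    linarith
  have hn0 : (0 : ℝ) < n := by positivity
  have hcn : 1 ≤ c * n := (one_le_log_natCast hn).trans ((div_le_iff₀ hn0).1 hc)
  have hc0 : 0 ≤ c := by nlinarith
  refine sum_sq_div_one_add_sq_bounds (by linarith) hδ₁ (Real.one_le_rpow hcn (by positivity))
    (mul_rpow_one_div_le hm0 hn0 hc0 hc') fun j hj => ?_
  have hcn0 : 0 ≤ c * n := by positivity
  simp only [← mul_mul_div_rpow_eq_mul_rpow_div_rpow hm0.ne' hcn0 _ (Nat.cast_nonneg j)]
  obtain ⟨hlo, hhi⟩ := hlam n j (mem_Icc.1 hj).1 (mem_Icc.1 hj).2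
  exact ⟨mul_le_mul_of_nonneg_left hlo hc0, mul_le_mul_of_nonneg_left hhi hc0⟩

/-- If the eigenvalues satisfy `δ₁ n/j^m ≤ λ_{j,n} ≤ δ₂ n/j^m`, then the
risk-based variance function `D₂(c) = Σ_j (cλ_{j,n})²/(1+cλ_{j,n})²` is of exact
order `(cn)^{1/m}`, uniformly in `c ∈ [log n / n, n^{m-1}]`, for large `n`. -/
theorem variance_function_order_risk
    (m : ℝ) (hm : 1 ≤ m) (δ₁ δ₂ : ℝ) (hδ₁ : 0 < δ₁) (hδ : δ₁ ≤ δ₂)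
    (lam : ℕ → ℕ → ℝ)
    (hlam : ∀ n j : ℕ, 1 ≤ j → j ≤ n →
      δ₁ * n / (j : ℝ) ^ m ≤ lam n j ∧ lam n j ≤ δ₂ * n / (j : ℝ) ^ m) :
    ∃ k K : ℝ, 0 < k ∧ k ≤ K ∧ ∃ N : ℕ, ∀ n : ℕ, N ≤ n → ∀ c : ℝ,
      Real.log n / n ≤ c → c ≤ (n : ℝ) ^ (m - 1) →
      k * (c * n) ^ (1 / m) ≤
        (∑ j ∈ Finset.Icc 1 n, (c * lam n j) ^ 2 / (1 + c * lam n j) ^ 2) ∧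
      (∑ j ∈ Finset.Icc 1 n, (c * lam n j) ^ 2 / (1 + c * lam n j) ^ 2) ≤
        K * (c * n) ^ (1 / m) :=
  variance_function_order_risk_general m hm δ₁ δ₂ hδ₁ lam hlam
end

section
/- For m ≥ 1, γ > -1, ν with γ − mν < −1, and any l_n → ∞, the double sum Σ_{i=1}^n Σ_{j=1}^n (ij)^γ/((ij)^m + cn²)^ν is of exact order (cn²)^{γ/m − ν + 1/m}(1 + log(cn²)) when cn² ≤ n^m, and of order (cn²)^{γ/m − ν + 1/m}(1 + log(n^{2m}/(cn²))) when cn² ≥ n^m, uniformly for c ∈ [l_n/n², n^{2m-2}]. -/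
/-!
Write `c n² = B ^ m` and `β = γ - m ν`. The summand `f x = x ^ γ / (x ^ m + B ^ m) ^ ν` is
comparable to `B ^ (-m ν) x ^ γ` for `x ≤ B` and at most `x ^ β` everywhere. Hence the row
`∑_j f (i j)` is of order `B ^ (β + 1) / i` for the rows `B / n < i ≤ min n B` that cross the
hyperbola `i j = B` inside the square `[1, n]²`, while all other rows together contribute
`O(B ^ (β + 1))`. The harmonic sum over the crossing rows is `log (min B (n² / B))` up to
constants, and `m log (min B (n² / B))` is exactly the logarithm of the statement.
-/

open Finset Real

lemma sum_Ioc_le_add_sum_Ioc {f : ℕ → ℝ} (hf : ∀ i, 0 ≤ f i) (l k n : ℕ) :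
    ∑ i ∈ Ioc l n, f i ≤ ∑ i ∈ Ioc l k, f i + ∑ i ∈ Ioc k n, f i := by
  have hdisj : Disjoint (Ioc l k) (Ioc k n) :=
    disjoint_left.2 fun i h₁ h₂ => by simp only [mem_Ioc] at h₁ h₂; omega
  rw [← sum_union hdisj]
  exact sum_le_sum_of_subset_of_nonneg (fun i => by simp only [mem_union, mem_Ioc]; omega)
    fun i _ _ => hf i

lemma pos_of_mem_Ioc {a b i : ℕ} (hi : i ∈ Ioc a b) : 0 < i :=
  (Nat.zero_le a).trans_lt (mem_Ioc.1 hi).1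

lemma AntitoneOn.sum_Ioc_le_integral {f : ℝ → ℝ} {a b : ℕ} (hab : a ≤ b)
    (hf : AntitoneOn f (Set.Icc (a : ℝ) b)) :
    ∑ i ∈ Ioc a b, f i ≤ ∫ x in a..b, f x := by
  have := hf.sum_le_integral_Ico hab
  rwa [← Ico_add_one_add_one_eq_Ioc, ← sum_Ico_add' (f := fun i : ℕ => f i)]

lemma MonotoneOn.integral_le_sum_Ioc {f : ℝ → ℝ} {a b : ℕ} (hab : a ≤ b)
    (hf : MonotoneOn f (Set.Icc (a : ℝ) b)) :
    ∫ x in a..b, f x ≤ ∑ i ∈ Ioc a b, f i := by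
  have := hf.integral_le_sum_Ico hab
  rwa [← Ico_add_one_add_one_eq_Ioc, ← sum_Ico_add' (f := fun i : ℕ => f i)]

lemma AntitoneOn.integral_le_sum_Ioc {f : ℝ → ℝ} {a b : ℕ} (hab : a ≤ b)
    (hf : AntitoneOn f (Set.Icc ((a : ℝ) + 1) (b + 1))) :
    ∫ x in (a : ℝ) + 1..b + 1, f x ≤ ∑ i ∈ Ioc a b, f i := by
  have := AntitoneOn.integral_le_sum_Ico (a := a + 1) (b := b + 1) (by omega)
    (by push_cast; exact hf)
  push_cast at this
  rwa [Ico_add_one_add_one_eq_Ioc] at this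

/-- Splitting off the first term keeps `0` out of the interval of monotonicity when `a = 0`. -/
lemma AntitoneOn.sum_Ioc_le_add_integral {f : ℝ → ℝ} {a b : ℕ} (hab : a < b)
    (hf : AntitoneOn f (Set.Icc ((a : ℝ) + 1) b)) :
    ∑ i ∈ Ioc a b, f i ≤ f (a + 1) + ∫ x in (a : ℝ) + 1..b, f x := by
  rw [← sum_Ioc_consecutive _ (Nat.le_succ a) hab, Nat.Ioc_succ_singleton, sum_singleton]
  push_cast
  gcongr
  exact_mod_cast AntitoneOn.sum_Ioc_le_integral (a := a + 1) hab (by push_cast; exact hf)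

/-- One term plus the comparison integral of `x ^ p`, which contributes the factor `|p + 1|⁻¹`. -/
noncomputable def powSumConst (p : ℝ) : ℝ := 1 + |p + 1|⁻¹

lemma one_le_powSumConst (p : ℝ) : 1 ≤ powSumConst p := by
  unfold powSumConst; simp

lemma powSumConst_pos (p : ℝ) : 0 < powSumConst p :=
  one_pos.trans_le (one_le_powSumConst p)

noncomputable def powSumLowerConst (p : ℝ) : ℝ := (2 ^ (p + 1) * (p + 2))⁻¹

lemma powSumLowerConst_pos {p : ℝ} (hp : -1 < p) : 0 < powSumLowerConst p :=
  inv_pos.2 (mul_pos (by positivity) (by linarith))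

lemma powSumLowerConst_le_one {p : ℝ} (hp : -1 < p) : powSumLowerConst p ≤ 1 :=
  inv_le_one_of_one_le₀
    (one_le_mul_of_one_le_of_one_le (one_le_rpow (by norm_num) (by linarith)) (by linarith))

lemma antitoneOn_rpow_of_nonpos {p : ℝ} (hp : p ≤ 0) {a b : ℝ} (ha : 0 < a) :
    AntitoneOn (fun x : ℝ => x ^ p) (Set.Icc a b) :=
  fun _ hx _ _ hxy => rpow_le_rpow_of_nonpos (ha.trans_le hx.1) hxy hp

lemma sum_Ioc_rpow_self {p : ℝ} (hp : 0 < p + 1) (s : ℕ) :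
    ∑ _i ∈ Ioc 0 s, (s : ℝ) ^ p = (s : ℝ) ^ (p + 1) := by
  rcases Nat.eq_zero_or_pos s with rfl | hs
  · simp [zero_rpow hp.ne']
  rw [sum_const, Nat.card_Ioc, Nat.sub_zero, nsmul_eq_mul, rpow_add_one (by positivity)]
  ring

lemma sum_Ioc_rpow_le {p : ℝ} (hp : -1 < p) (s : ℕ) :
    ∑ i ∈ Ioc 0 s, (i : ℝ) ^ p ≤ powSumConst p * (s : ℝ) ^ (p + 1) := by
  have hp1 : 0 < p + 1 := by linarith
  rw [powSumConst, abs_of_pos hp1]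
  rcases Nat.eq_zero_or_pos s with rfl | hs
  · simp [zero_rpow hp1.ne']
  have hs1 : (1 : ℝ) ≤ s := by exact_mod_cast hs
  have hsp : 1 ≤ (s : ℝ) ^ (p + 1) := one_le_rpow hs1 hp1.le
  rcases le_or_gt 0 p with hp0 | hp0
  · calc ∑ i ∈ Ioc 0 s, (i : ℝ) ^ p ≤ ∑ _i ∈ Ioc 0 s, (s : ℝ) ^ p :=
          sum_le_sum fun i hi => rpow_le_rpow (Nat.cast_nonneg i)
            (by exact_mod_cast (mem_Ioc.1 hi).2) hp0
      _ = (s : ℝ) ^ (p + 1) := sum_Ioc_rpow_self hp1 s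
      _ ≤ _ := le_mul_of_one_le_left (by positivity) (by simp; linarith)
  · have hint := AntitoneOn.sum_Ioc_le_add_integral hs
      (antitoneOn_rpow_of_nonpos hp0.le (b := s) (by simp))
    rw [integral_rpow (Or.inl hp)] at hint
    simp only [CharP.cast_eq_zero, zero_add, one_rpow] at hint
    have hw := inv_pos.2 hp1
    rw [div_eq_mul_inv] at hint
    nlinarith

lemma sum_Ioc_rpow_tail_le {q : ℝ} (hq : q < -1) (a s : ℕ) :
    ∑ i ∈ Ioc a s, (i : ℝ) ^ q ≤ powSumConst q * ((a : ℝ) + 1) ^ (q + 1) := by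
  have hq1 : q + 1 < 0 := by linarith
  have ha : (1 : ℝ) ≤ a + 1 := by simp
  rcases le_or_gt s a with hsa | has
  · rw [Ioc_eq_empty_of_le hsa, sum_empty]
    exact mul_nonneg (powSumConst_pos q).le (by positivity)
  rw [powSumConst, abs_of_neg hq1]
  have hint := AntitoneOn.sum_Ioc_le_add_integral has
    (antitoneOn_rpow_of_nonpos (by linarith) (b := s) (by positivity))
  have h0 : (0 : ℝ) ∉ Set.uIcc ((a : ℝ) + 1) s := fun h => by
    rw [Set.uIcc_of_le (by exact_mod_cast has)] at h; linarith [h.1]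
  rw [integral_rpow (Or.inr ⟨by linarith, h0⟩)] at hint
  have h1 : ((a : ℝ) + 1) ^ q ≤ ((a : ℝ) + 1) ^ (q + 1) :=
    rpow_le_rpow_of_exponent_le ha (by linarith)
  have h2 : 0 ≤ (s : ℝ) ^ (q + 1) := by positivity
  have hw : 0 < (-(q + 1))⁻¹ := inv_pos.2 (by linarith)
  have hdiv : ((s : ℝ) ^ (q + 1) - ((a : ℝ) + 1) ^ (q + 1)) / (q + 1)
      = (((a : ℝ) + 1) ^ (q + 1) - (s : ℝ) ^ (q + 1)) * (-(q + 1))⁻¹ := by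
    field_simp; ring
  rw [hdiv] at hint
  nlinarith

lemma sum_Ioc_floor_rpow_le {p : ℝ} (hp : -1 < p) {t : ℝ} (ht : 0 ≤ t) :
    ∑ i ∈ Ioc 0 ⌊t⌋₊, (i : ℝ) ^ p ≤ powSumConst p * t ^ (p + 1) :=
  (sum_Ioc_rpow_le hp _).trans <| mul_le_mul_of_nonneg_left
    (rpow_le_rpow (Nat.cast_nonneg _) (Nat.floor_le ht) (by linarith)) (powSumConst_pos p).le

lemma sum_Ioc_floor_rpow_tail_le {q : ℝ} (hq : q < -1) {t : ℝ} (ht : 0 < t) (s : ℕ) :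
    ∑ i ∈ Ioc ⌊t⌋₊ s, (i : ℝ) ^ q ≤ powSumConst q * t ^ (q + 1) :=
  (sum_Ioc_rpow_tail_le hq _ s).trans <| mul_le_mul_of_nonneg_left
    (rpow_le_rpow_of_nonpos ht (Nat.lt_floor_add_one t).le (by linarith)) (powSumConst_pos q).le

lemma le_sum_Ioc_rpow {p : ℝ} (hp : -1 < p) (s : ℕ) :
    (p + 2)⁻¹ * (s : ℝ) ^ (p + 1) ≤ ∑ i ∈ Ioc 0 s, (i : ℝ) ^ p := by
  have hp1 : 0 < p + 1 := by linarith
  rcases le_or_gt 0 p with hp0 | hp0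
  · have hint := MonotoneOn.integral_le_sum_Ioc (Nat.zero_le s) (f := fun x => x ^ p)
      fun x hx y _ hxy => rpow_le_rpow (by simpa using hx.1) hxy hp0
    rw [integral_rpow (Or.inl hp)] at hint
    simp only [CharP.cast_eq_zero, ne_eq, hp1.ne', not_false_eq_true, zero_rpow, sub_zero] at hint
    refine le_trans ?_ hint
    rw [div_eq_inv_mul]
    gcongr
    linarith
  · calc (p + 2)⁻¹ * (s : ℝ) ^ (p + 1) ≤ (s : ℝ) ^ (p + 1) :=
          mul_le_of_le_one_left (by positivity) (inv_le_one_of_one_le₀ (by linarith))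
      _ = ∑ _i ∈ Ioc 0 s, (s : ℝ) ^ p := (sum_Ioc_rpow_self hp1 s).symm
      _ ≤ ∑ i ∈ Ioc 0 s, (i : ℝ) ^ p := sum_le_sum fun i hi => by
          have hi := mem_Ioc.1 hi
          exact rpow_le_rpow_of_nonpos (by exact_mod_cast hi.1) (by exact_mod_cast hi.2) hp0.le

lemma le_sum_Ioc_floor_rpow {p : ℝ} (hp : -1 < p) {t : ℝ} (ht : 1 ≤ t) :
    powSumLowerConst p * t ^ (p + 1) ≤ ∑ i ∈ Ioc 0 ⌊t⌋₊, (i : ℝ) ^ p := by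
  have hfloor : (1 : ℝ) ≤ ⌊t⌋₊ := by exact_mod_cast (Nat.one_le_floor_iff t).2 ht
  have ht2 : t ≤ 2 * ⌊t⌋₊ := by linarith [Nat.lt_floor_add_one t]
  refine le_trans ?_ (le_sum_Ioc_rpow hp _)
  calc powSumLowerConst p * t ^ (p + 1) ≤ powSumLowerConst p * (2 * ⌊t⌋₊) ^ (p + 1) :=
        mul_le_mul_of_nonneg_left (rpow_le_rpow (by linarith) ht2 (by linarith))
          (powSumLowerConst_pos hp).le
    _ = (p + 2)⁻¹ * (⌊t⌋₊ : ℝ) ^ (p + 1) := by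
        rw [powSumLowerConst, mul_rpow (by norm_num) (by positivity)]
        field_simp

lemma sum_Ioc_inv_le {a b : ℕ} {X : ℝ} (hX : 1 ≤ X) (hb : (b : ℝ) ≤ X * (a + 1)) :
    ∑ i ∈ Ioc a b, (i : ℝ)⁻¹ ≤ 1 + log X := by
  have hlogX := log_nonneg hX
  rcases le_or_gt b a with hba | hab
  · rw [Ioc_eq_empty_of_le hba, sum_empty]; linarith
  have hb0 : (0 : ℝ) < b := by exact_mod_cast (Nat.zero_le a).trans_lt hab
  have hint := AntitoneOn.sum_Ioc_le_add_integral hab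
    (f := fun x => x⁻¹) fun x hx y _ hxy => inv_anti₀ (by linarith [hx.1]) hxy
  rw [integral_inv_of_pos (by positivity) hb0] at hint
  have h1 : ((a : ℝ) + 1)⁻¹ ≤ 1 := inv_le_one_of_one_le₀ (by simp)
  have h2 : log ((b : ℝ) / (a + 1)) ≤ log X :=
    log_le_log (by positivity) ((div_le_iff₀ (by positivity)).2 hb)
  linarith

lemma log_le_sum_Ioc_inv (a b : ℕ) :
    log (((b : ℝ) + 1) / (a + 1)) ≤ ∑ i ∈ Ioc a b, (i : ℝ)⁻¹ := by
  rcases le_or_gt a b with hab | hba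
  · have hint := AntitoneOn.integral_le_sum_Ioc hab
      (f := fun x => x⁻¹) fun x hx y _ hxy => inv_anti₀ (by linarith [hx.1]) hxy
    rwa [integral_inv_of_pos (by positivity) (by positivity)] at hint
  · rw [Ioc_eq_empty_of_le hba.le, sum_empty]
    have : (b : ℝ) ≤ a := by exact_mod_cast hba.le
    exact log_nonpos (by positivity) ((div_le_one (by positivity)).2 (by linarith))

lemma rpow_mul_div_rpow_add_one {x : ℝ} (hx : 0 < x) {b : ℝ} (hb : 0 ≤ b) (p : ℝ) :
    x ^ p * (b / x) ^ (p + 1) = b ^ (p + 1) / x := by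
  rw [div_rpow hb hx.le, rpow_add_one hx.ne']
  field_simp

lemma rpow_sub_mul_rpow_add_one {B : ℝ} (hB : 0 < B) (β γ : ℝ) :
    B ^ (β - γ) * B ^ (γ + 1) = B ^ (β + 1) := by
  rw [← rpow_add hB]; ring_nf

noncomputable def rowSum (f : ℝ → ℝ) (n i : ℕ) : ℝ := ∑ j ∈ Ioc 0 n, f (i * j)

noncomputable def crossoverRows (B : ℝ) (n : ℕ) : Finset ℕ := Ioc ⌊B / n⌋₊ (min n ⌊B⌋₊)

lemma mem_crossoverRows {B : ℝ} (hB : 0 ≤ B) {n i : ℕ} (hi : i ∈ crossoverRows B n) :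
    0 < i ∧ B / n < i ∧ i ≤ n ∧ (i : ℝ) ≤ B := by
  rw [crossoverRows, mem_Ioc, le_min_iff] at hi
  obtain ⟨h₁, h₂, h₃⟩ := hi
  exact ⟨by omega, (Nat.floor_lt (by positivity)).1 h₁, h₂, (Nat.le_floor_iff hB).1 h₃⟩

lemma crossoverRows_subset (B : ℝ) (n : ℕ) : crossoverRows B n ⊆ Ioc 0 n :=
  fun i hi => by rw [crossoverRows, mem_Ioc] at hi; rw [mem_Ioc]; omega

lemma pos_of_one_le_of_le_sq {B : ℝ} {n : ℕ} (hB : 1 ≤ B) (hBn : B ≤ n ^ 2) : (0 : ℝ) < n := by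
  rcases Nat.eq_zero_or_pos n with rfl | hn
  · norm_num at hBn; linarith
  · exact_mod_cast hn

lemma one_le_min_div {B : ℝ} {n : ℕ} (hB : 1 ≤ B) (hBn : B ≤ n ^ 2) :
    1 ≤ min B (n ^ 2 / B) :=
  le_min hB ((le_div_iff₀ (by linarith)).2 (by linarith))

lemma sum_crossoverRows_inv_le {B : ℝ} {n : ℕ} (hB : 1 ≤ B) (hBn : B ≤ n ^ 2) :
    ∑ i ∈ crossoverRows B n, (i : ℝ)⁻¹ ≤ 1 + log (min B (n ^ 2 / B)) := by
  have hB0 : 0 < B := by linarith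
  have hn := pos_of_one_le_of_le_sq hB hBn
  refine sum_Ioc_inv_le (one_le_min_div hB hBn) ?_
  have hfl := Nat.lt_floor_add_one (B / n)
  rcases le_total B n with h | h
  · rw [min_eq_left ((le_div_iff₀ hB0).2 (by nlinarith))]
    have : ((min n ⌊B⌋₊ : ℕ) : ℝ) ≤ B :=
      (Nat.cast_le.2 (min_le_right _ _)).trans (Nat.floor_le hB0.le)
    nlinarith [Nat.cast_nonneg (α := ℝ) ⌊B / n⌋₊]
  · rw [min_eq_right ((div_le_iff₀ hB0).2 (by nlinarith))]
    calc ((min n ⌊B⌋₊ : ℕ) : ℝ) ≤ n := by exact_mod_cast min_le_left _ _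
      _ = n ^ 2 / B * (B / n) := by field_simp
      _ ≤ _ := by gcongr

lemma log_le_sum_crossoverRows_inv {B : ℝ} {n : ℕ} (hB : 1 ≤ B) (hBn : B ≤ n ^ 2) :
    log (min B (n ^ 2 / B) / 2) ≤ ∑ i ∈ crossoverRows B n, (i : ℝ)⁻¹ := by
  have hB0 : 0 < B := by linarith
  have hn := pos_of_one_le_of_le_sq hB hBn
  refine le_trans ?_ (log_le_sum_Ioc_inv _ _)
  have hM := one_le_min_div hB hBn
  refine log_le_log (by positivity) ?_
  rw [div_le_div_iff₀ (by norm_num) (by positivity)]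
  have hfl : (⌊B / n⌋₊ : ℝ) ≤ B / n := Nat.floor_le (by positivity)
  rcases le_total B n with h | h
  · rw [min_eq_left ((le_div_iff₀ hB0).2 (by nlinarith)),
      min_eq_right (Nat.floor_le_of_le h)]
    have : B / n ≤ 1 := (div_le_one hn).2 h
    nlinarith [Nat.lt_floor_add_one B]
  · rw [min_eq_right ((div_le_iff₀ hB0).2 (by nlinarith)), min_eq_left (Nat.le_floor h)]
    have : (n : ℝ) ^ 2 / B ≤ n := (div_le_iff₀ hB0).2 (by nlinarith)
    calc (n : ℝ) ^ 2 / B * (⌊B / n⌋₊ + 1) ≤ n ^ 2 / B * (B / n + 1) := by gcongr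
      _ = n + n ^ 2 / B := by field_simp
      _ ≤ _ := by linarith

section LatticeSum

variable {f : ℝ → ℝ} {γ β B : ℝ} {n : ℕ}

lemma rowSum_nonneg (hf0 : ∀ x, 0 ≤ x → 0 ≤ f x) (n i : ℕ) : 0 ≤ rowSum f n i :=
  sum_nonneg fun _ _ => hf0 _ (by positivity)

lemma apply_mul_le_of_le_rpow_gamma (hfγ : ∀ x, 0 < x → f x ≤ B ^ (β - γ) * x ^ γ) {i j : ℕ}
    (hi : 0 < i) (hj : 0 < j) : f (i * j) ≤ B ^ (β - γ) * (i : ℝ) ^ γ * (j : ℝ) ^ γ := by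
  rw [mul_assoc, ← mul_rpow (Nat.cast_nonneg i) (Nat.cast_nonneg j)]
  exact hfγ _ (by positivity)

lemma apply_mul_le_of_le_rpow_beta (hfβ : ∀ x, 0 < x → f x ≤ x ^ β) {i j : ℕ}
    (hi : 0 < i) (hj : 0 < j) : f (i * j) ≤ (i : ℝ) ^ β * (j : ℝ) ^ β := by
  rw [← mul_rpow (Nat.cast_nonneg i) (Nat.cast_nonneg j)]
  exact hfβ _ (by positivity)

lemma rowSum_le_rpow_gamma (hγ : -1 < γ) (hB : 0 < B)
    (hfγ : ∀ x, 0 < x → f x ≤ B ^ (β - γ) * x ^ γ) (n : ℕ) {i : ℕ} (hi : 0 < i) :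
    rowSum f n i ≤ powSumConst γ * B ^ (β - γ) * (n : ℝ) ^ (γ + 1) * (i : ℝ) ^ γ := by
  calc rowSum f n i ≤ ∑ j ∈ Ioc 0 n, B ^ (β - γ) * (i : ℝ) ^ γ * (j : ℝ) ^ γ :=
        sum_le_sum fun j hj => apply_mul_le_of_le_rpow_gamma hfγ hi (pos_of_mem_Ioc hj)
    _ = B ^ (β - γ) * (i : ℝ) ^ γ * ∑ j ∈ Ioc 0 n, (j : ℝ) ^ γ := by rw [mul_sum]
    _ ≤ B ^ (β - γ) * (i : ℝ) ^ γ * (powSumConst γ * (n : ℝ) ^ (γ + 1)) :=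
        mul_le_mul_of_nonneg_left (sum_Ioc_rpow_le hγ n) (by positivity)
    _ = _ := by ring

lemma rowSum_le_rpow_beta (hβ : β < -1) (hfβ : ∀ x, 0 < x → f x ≤ x ^ β)
    (n : ℕ) {i : ℕ} (hi : 0 < i) :
    rowSum f n i ≤ powSumConst β * (i : ℝ) ^ β := by
  calc rowSum f n i ≤ ∑ j ∈ Ioc 0 n, (i : ℝ) ^ β * (j : ℝ) ^ β :=
        sum_le_sum fun j hj => apply_mul_le_of_le_rpow_beta hfβ hi (pos_of_mem_Ioc hj)
    _ = (i : ℝ) ^ β * ∑ j ∈ Ioc 0 n, (j : ℝ) ^ β := by rw [mul_sum]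
    _ ≤ (i : ℝ) ^ β * powSumConst β := by
        gcongr; simpa using sum_Ioc_rpow_tail_le hβ 0 n
    _ = _ := by ring

/-- Split the row where `i * j` crosses `B`, using the `x ^ γ` bound before and the `x ^ β`
bound after the crossing. -/
lemma rowSum_le_inv (hγ : -1 < γ) (hβ : β < -1) (hB : 0 < B) (hf0 : ∀ x, 0 ≤ x → 0 ≤ f x)
    (hfγ : ∀ x, 0 < x → f x ≤ B ^ (β - γ) * x ^ γ) (hfβ : ∀ x, 0 < x → f x ≤ x ^ β)
    (n : ℕ) {i : ℕ} (hi : 0 < i) :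
    rowSum f n i ≤ (powSumConst γ + powSumConst β) * B ^ (β + 1) / i := by
  have hi' : (0 : ℝ) < i := by exact_mod_cast hi
  have ht : 0 < B / i := by positivity
  calc rowSum f n i
      ≤ ∑ j ∈ Ioc 0 ⌊B / i⌋₊, f (i * j) + ∑ j ∈ Ioc ⌊B / i⌋₊ n, f (i * j) :=
        sum_Ioc_le_add_sum_Ioc (fun j => hf0 _ (by positivity)) _ _ _
    _ ≤ ∑ j ∈ Ioc 0 ⌊B / i⌋₊, B ^ (β - γ) * (i : ℝ) ^ γ * (j : ℝ) ^ γ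
          + ∑ j ∈ Ioc ⌊B / i⌋₊ n, (i : ℝ) ^ β * (j : ℝ) ^ β :=
        add_le_add
          (sum_le_sum fun j hj => apply_mul_le_of_le_rpow_gamma hfγ hi (pos_of_mem_Ioc hj))
          (sum_le_sum fun j hj => apply_mul_le_of_le_rpow_beta hfβ hi (pos_of_mem_Ioc hj))
    _ = B ^ (β - γ) * (i : ℝ) ^ γ * ∑ j ∈ Ioc 0 ⌊B / i⌋₊, (j : ℝ) ^ γ
          + (i : ℝ) ^ β * ∑ j ∈ Ioc ⌊B / i⌋₊ n, (j : ℝ) ^ β := by rw [mul_sum, mul_sum]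
    _ ≤ B ^ (β - γ) * (i : ℝ) ^ γ * (powSumConst γ * (B / i) ^ (γ + 1))
          + (i : ℝ) ^ β * (powSumConst β * (B / i) ^ (β + 1)) := by
        gcongr
        · exact sum_Ioc_floor_rpow_le hγ ht.le
        · exact sum_Ioc_floor_rpow_tail_le hβ ht n
    _ = powSumConst γ * B ^ (β - γ) * ((i : ℝ) ^ γ * (B / i) ^ (γ + 1))
          + powSumConst β * ((i : ℝ) ^ β * (B / i) ^ (β + 1)) := by ring
    _ = _ := by
        rw [rpow_mul_div_rpow_add_one hi' hB.le, rpow_mul_div_rpow_add_one hi' hB.le,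
          ← rpow_sub_mul_rpow_add_one hB β γ]
        ring

lemma le_rowSum (hγ : -1 < γ) {c : ℝ} (hc : 0 ≤ c) (hf0 : ∀ x, 0 ≤ x → 0 ≤ f x)
    (hfl : ∀ x, 0 < x → x ≤ B → c * (B ^ (β - γ) * x ^ γ) ≤ f x)
    {i : ℕ} (hi : 0 < i) {t : ℝ} (ht : 1 ≤ t) (hit : i * t ≤ B) (htn : ⌊t⌋₊ ≤ n) :
    c * powSumLowerConst γ * B ^ (β - γ) * (i : ℝ) ^ γ * t ^ (γ + 1) ≤ rowSum f n i := by
  have hi' : (0 : ℝ) < i := by exact_mod_cast hi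
  have hB : 0 < B := (mul_pos hi' (by linarith)).trans_le hit
  calc c * powSumLowerConst γ * B ^ (β - γ) * (i : ℝ) ^ γ * t ^ (γ + 1)
      = c * B ^ (β - γ) * (i : ℝ) ^ γ * (powSumLowerConst γ * t ^ (γ + 1)) := by ring
    _ ≤ c * B ^ (β - γ) * (i : ℝ) ^ γ * ∑ j ∈ Ioc 0 ⌊t⌋₊, (j : ℝ) ^ γ :=
        mul_le_mul_of_nonneg_left (le_sum_Ioc_floor_rpow hγ ht) (by positivity)
    _ = ∑ j ∈ Ioc 0 ⌊t⌋₊, c * (B ^ (β - γ) * ((i : ℝ) * j) ^ γ) := by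
        rw [mul_sum]
        refine sum_congr rfl fun j _ => ?_
        rw [mul_rpow hi'.le (Nat.cast_nonneg j)]; ring
    _ ≤ ∑ j ∈ Ioc 0 ⌊t⌋₊, f (i * j) := sum_le_sum fun j hj => by
        have hj := mem_Ioc.1 hj
        refine hfl _ (mul_pos hi' (by exact_mod_cast hj.1)) (le_trans ?_ hit)
        gcongr
        exact (Nat.le_floor_iff (by linarith)).1 hj.2
    _ ≤ rowSum f n i :=
        sum_le_sum_of_subset_of_nonneg (Ioc_subset_Ioc_right htn)
          fun j _ _ => hf0 _ (by positivity)

lemma sum_Ioc_le_split_crossoverRows {F : ℕ → ℝ} (hF : ∀ i, 0 ≤ F i) (B : ℝ) (n : ℕ) :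
    ∑ i ∈ Ioc 0 n, F i ≤
      ∑ i ∈ Ioc 0 ⌊B / n⌋₊, F i + ∑ i ∈ crossoverRows B n, F i + ∑ i ∈ Ioc ⌊B⌋₊ n, F i := by
  have hIoc : Ioc (min n ⌊B⌋₊) n = Ioc ⌊B⌋₊ n := by ext i; simp only [mem_Ioc]; omega
  rw [add_assoc, crossoverRows, ← hIoc]
  exact (sum_Ioc_le_add_sum_Ioc hF 0 _ n).trans
    (add_le_add le_rfl (sum_Ioc_le_add_sum_Ioc hF _ _ n))

lemma sum_rowSum_small_le (hγ : -1 < γ) (hB : 0 < B) (hn : (0 : ℝ) < n)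
    (hfγ : ∀ x, 0 < x → f x ≤ B ^ (β - γ) * x ^ γ) :
    ∑ i ∈ Ioc 0 ⌊B / n⌋₊, rowSum f n i ≤ powSumConst γ ^ 2 * B ^ (β + 1) := by
  have hC := (powSumConst_pos γ).le
  calc ∑ i ∈ Ioc 0 ⌊B / n⌋₊, rowSum f n i
      ≤ ∑ i ∈ Ioc 0 ⌊B / n⌋₊, powSumConst γ * B ^ (β - γ) * (n : ℝ) ^ (γ + 1) * (i : ℝ) ^ γ :=
        sum_le_sum fun i hi => rowSum_le_rpow_gamma hγ hB hfγ n (pos_of_mem_Ioc hi)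
    _ = powSumConst γ * B ^ (β - γ) * (n : ℝ) ^ (γ + 1) * ∑ i ∈ Ioc 0 ⌊B / n⌋₊, (i : ℝ) ^ γ := by
        rw [mul_sum]
    _ ≤ powSumConst γ * B ^ (β - γ) * (n : ℝ) ^ (γ + 1) * (powSumConst γ * (B / n) ^ (γ + 1)) :=
        mul_le_mul_of_nonneg_left (sum_Ioc_floor_rpow_le hγ (by positivity)) (by positivity)
    _ = powSumConst γ ^ 2 * (B ^ (β - γ) * ((n : ℝ) * (B / n)) ^ (γ + 1)) := by
        rw [mul_rpow hn.le (by positivity)]; ring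
    _ = _ := by rw [mul_div_cancel₀ _ hn.ne', rpow_sub_mul_rpow_add_one hB]

lemma sum_rowSum_crossoverRows_le (hγ : -1 < γ) (hβ : β < -1) (hB : 1 ≤ B) (hBn : B ≤ n ^ 2)
    (hf0 : ∀ x, 0 ≤ x → 0 ≤ f x) (hfγ : ∀ x, 0 < x → f x ≤ B ^ (β - γ) * x ^ γ)
    (hfβ : ∀ x, 0 < x → f x ≤ x ^ β) :
    ∑ i ∈ crossoverRows B n, rowSum f n i ≤
      (powSumConst γ + powSumConst β) * B ^ (β + 1) * (1 + log (min B (n ^ 2 / B))) := by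
  have hB0 : 0 < B := by linarith
  have hC := add_pos (powSumConst_pos γ) (powSumConst_pos β)
  calc ∑ i ∈ crossoverRows B n, rowSum f n i
      ≤ ∑ i ∈ crossoverRows B n, (powSumConst γ + powSumConst β) * B ^ (β + 1) * (i : ℝ)⁻¹ :=
        sum_le_sum fun i hi => (rowSum_le_inv hγ hβ hB0 hf0 hfγ hfβ n
          (mem_crossoverRows hB0.le hi).1).trans_eq (div_eq_mul_inv _ _)
    _ = (powSumConst γ + powSumConst β) * B ^ (β + 1) * ∑ i ∈ crossoverRows B n, (i : ℝ)⁻¹ := by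
        rw [mul_sum]
    _ ≤ _ := mul_le_mul_of_nonneg_left (sum_crossoverRows_inv_le hB hBn) (by positivity)

lemma sum_rowSum_large_le (hβ : β < -1) (hB : 0 < B) (hfβ : ∀ x, 0 < x → f x ≤ x ^ β) :
    ∑ i ∈ Ioc ⌊B⌋₊ n, rowSum f n i ≤ powSumConst β ^ 2 * B ^ (β + 1) :=
  calc ∑ i ∈ Ioc ⌊B⌋₊ n, rowSum f n i ≤ ∑ i ∈ Ioc ⌊B⌋₊ n, powSumConst β * (i : ℝ) ^ β :=
        sum_le_sum fun i hi => rowSum_le_rpow_beta hβ hfβ n (pos_of_mem_Ioc hi)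
    _ = powSumConst β * ∑ i ∈ Ioc ⌊B⌋₊ n, (i : ℝ) ^ β := by rw [mul_sum]
    _ ≤ powSumConst β * (powSumConst β * B ^ (β + 1)) :=
        mul_le_mul_of_nonneg_left (sum_Ioc_floor_rpow_tail_le hβ hB n) (powSumConst_pos β).le
    _ = _ := by ring

theorem sum_rowSum_le (hγ : -1 < γ) (hβ : β < -1) (hB : 1 ≤ B) (hBn : B ≤ n ^ 2)
    (hf0 : ∀ x, 0 ≤ x → 0 ≤ f x) (hfγ : ∀ x, 0 < x → f x ≤ B ^ (β - γ) * x ^ γ)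
    (hfβ : ∀ x, 0 < x → f x ≤ x ^ β) :
    ∑ i ∈ Ioc 0 n, rowSum f n i ≤
      (powSumConst γ + powSumConst β) ^ 2 * B ^ (β + 1) * (1 + log (min B (n ^ 2 / B))) := by
  have hB0 : 0 < B := by linarith
  have hsplit := sum_Ioc_le_split_crossoverRows (rowSum_nonneg hf0 n) B n
  have hsmall := sum_rowSum_small_le hγ hB0 (pos_of_one_le_of_le_sq hB hBn) hfγ
  have hcross := sum_rowSum_crossoverRows_le hγ hβ hB hBn hf0 hfγ hfβ
  have hlarge := sum_rowSum_large_le (n := n) hβ hB0 hfβ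
  set Cγ := powSumConst γ
  set Cβ := powSumConst β
  set L := 1 + log (min B (n ^ 2 / B))
  have hL : 0 ≤ L - 1 := by
    simp only [L, add_sub_cancel_left]; exact log_nonneg (one_le_min_div hB hBn)
  have hX : 0 < B ^ (β + 1) := by positivity
  have hγ1 := one_le_powSumConst γ
  have hβ1 := one_le_powSumConst β
  -- `e₁ + e₂` is the gap between `(Cγ + Cβ) ^ 2 * B ^ (β + 1) * L` and the three bounds.
  have e₁ : 0 ≤ (Cγ ^ 2 + Cβ ^ 2) * B ^ (β + 1) * (L - 1) := by positivity
  have e₂ : 0 ≤ (Cγ * (Cβ - 1) + Cβ * (Cγ - 1)) * B ^ (β + 1) * L :=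
    mul_nonneg (mul_nonneg (by nlinarith) hX.le) (by linarith)
  linarith

lemma le_sum_rowSum_of_square (hγ : -1 < γ) {c : ℝ} (hc : 0 ≤ c) (hB : 1 ≤ B) (hBn : B ≤ n ^ 2)
    (hf0 : ∀ x, 0 ≤ x → 0 ≤ f x)
    (hfl : ∀ x, 0 < x → x ≤ B → c * (B ^ (β - γ) * x ^ γ) ≤ f x) :
    c * powSumLowerConst γ ^ 2 * B ^ (β + 1) ≤ ∑ i ∈ Ioc 0 n, rowSum f n i := by
  have hB0 : 0 < B := by linarith
  have hκ := powSumLowerConst_pos hγ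
  have hs1 : 1 ≤ √B := one_le_sqrt.2 hB
  have hsn : ⌊√B⌋₊ ≤ n := Nat.floor_le_of_le <| by
    simpa [sqrt_sq (Nat.cast_nonneg n)] using sqrt_le_sqrt hBn
  have hsq : √B ^ (γ + 1) * √B ^ (γ + 1) = B ^ (γ + 1) := by
    rw [← mul_rpow (sqrt_nonneg B) (sqrt_nonneg B), mul_self_sqrt hB0.le]
  calc c * powSumLowerConst γ ^ 2 * B ^ (β + 1)
      = c * powSumLowerConst γ * B ^ (β - γ) * √B ^ (γ + 1)
          * (powSumLowerConst γ * √B ^ (γ + 1)) := by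
        rw [← rpow_sub_mul_rpow_add_one hB0 β γ, ← hsq]
        ring
    _ ≤ c * powSumLowerConst γ * B ^ (β - γ) * √B ^ (γ + 1)
          * ∑ i ∈ Ioc 0 ⌊√B⌋₊, (i : ℝ) ^ γ :=
        mul_le_mul_of_nonneg_left (le_sum_Ioc_floor_rpow hγ hs1) (by positivity)
    _ = ∑ i ∈ Ioc 0 ⌊√B⌋₊,
          c * powSumLowerConst γ * B ^ (β - γ) * (i : ℝ) ^ γ * √B ^ (γ + 1) := by
        rw [mul_sum]; exact sum_congr rfl fun i _ => by ring
    _ ≤ ∑ i ∈ Ioc 0 ⌊√B⌋₊, rowSum f n i := sum_le_sum fun i hi => by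
        have hi := mem_Ioc.1 hi
        refine le_rowSum hγ hc hf0 hfl hi.1 hs1 ?_ hsn
        calc (i : ℝ) * √B ≤ √B * √B := by
              gcongr; exact (Nat.le_floor_iff (by positivity)).1 hi.2
          _ = B := mul_self_sqrt hB0.le
    _ ≤ ∑ i ∈ Ioc 0 n, rowSum f n i := sum_le_sum_of_subset_of_nonneg
        (Ioc_subset_Ioc_right hsn) fun i _ _ => rowSum_nonneg hf0 n i

lemma le_sum_rowSum_of_crossoverRows (hγ : -1 < γ) {c : ℝ} (hc : 0 ≤ c) (hB : 0 < B)
    (hn : (0 : ℝ) < n)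
    (hf0 : ∀ x, 0 ≤ x → 0 ≤ f x)
    (hfl : ∀ x, 0 < x → x ≤ B → c * (B ^ (β - γ) * x ^ γ) ≤ f x) :
    c * powSumLowerConst γ * B ^ (β + 1) * ∑ i ∈ crossoverRows B n, (i : ℝ)⁻¹ ≤
      ∑ i ∈ Ioc 0 n, rowSum f n i := by
  refine le_trans ?_ (sum_le_sum_of_subset_of_nonneg (crossoverRows_subset B n)
    fun i _ _ => rowSum_nonneg hf0 n i)
  rw [mul_sum]
  refine sum_le_sum fun i hi => ?_
  obtain ⟨hi0, hnB, -, hiB⟩ := mem_crossoverRows hB.le hi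
  have hi' : (0 : ℝ) < i := by exact_mod_cast hi0
  have hBi : B / i ≤ n := by
    rw [div_le_iff₀ hi']; rw [div_lt_iff₀ hn] at hnB; linarith
  calc c * powSumLowerConst γ * B ^ (β + 1) * (i : ℝ)⁻¹
      = c * powSumLowerConst γ * B ^ (β - γ) * (i : ℝ) ^ γ * (B / i) ^ (γ + 1) := by
        rw [mul_assoc _ ((i : ℝ) ^ γ), rpow_mul_div_rpow_add_one hi' hB.le,
          ← rpow_sub_mul_rpow_add_one hB β γ]
        ring
    _ ≤ rowSum f n i := le_rowSum hγ hc hf0 hfl hi0 ((one_le_div hi').2 hiB)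
        (by rw [mul_div_cancel₀ _ hi'.ne']) (Nat.floor_le_of_le hBi)

theorem le_sum_rowSum (hγ : -1 < γ) {c : ℝ} (hc : 0 < c) (hB : 1 ≤ B) (hBn : B ≤ n ^ 2)
    (hf0 : ∀ x, 0 ≤ x → 0 ≤ f x)
    (hfl : ∀ x, 0 < x → x ≤ B → c * (B ^ (β - γ) * x ^ γ) ≤ f x) :
    c * powSumLowerConst γ ^ 2 / 3 * B ^ (β + 1) * (1 + log (min B (n ^ 2 / B))) ≤
      ∑ i ∈ Ioc 0 n, rowSum f n i := by
  have hB0 : 0 < B := by linarith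
  have hn := pos_of_one_le_of_le_sq hB hBn
  have hsquare := le_sum_rowSum_of_square hγ hc.le hB hBn hf0 hfl
  have hcross := le_sum_rowSum_of_crossoverRows hγ hc.le hB0 hn hf0 hfl
  set S := ∑ i ∈ Ioc 0 n, rowSum f n i
  set κ := powSumLowerConst γ
  set H := ∑ i ∈ crossoverRows B n, (i : ℝ)⁻¹
  have hκ := powSumLowerConst_pos hγ
  have hκ1 := powSumLowerConst_le_one hγ
  have hharm := log_le_sum_crossoverRows_inv hB hBn
  have hH : 0 ≤ H := sum_nonneg fun i _ => by positivity
  have hlog : log (min B (n ^ 2 / B)) = log (min B (n ^ 2 / B) / 2) + log 2 := by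
    rw [log_div (by linarith [one_le_min_div hB hBn]) two_ne_zero]; ring
  have hlog2 : log 2 < 1 := by linarith [log_two_lt_d9]
  have hX : 0 < B ^ (β + 1) := by positivity
  set U := c * κ ^ 2 * B ^ (β + 1)
  have hU : 0 < U := by positivity
  have hUH : U * H ≤ S := le_trans (mul_le_mul_of_nonneg_right (mul_le_mul_of_nonneg_right
      (mul_le_mul_of_nonneg_left (by nlinarith) hc.le) hX.le) hH) hcross
  have h₁ := mul_le_mul_of_nonneg_left hharm hU.le
  have h₂ : U * log 2 ≤ U := mul_le_of_le_one_right hU.le hlog2.le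
  calc c * κ ^ 2 / 3 * B ^ (β + 1) * (1 + log (min B (n ^ 2 / B)))
      = (U + U * log (min B (n ^ 2 / B) / 2) + U * log 2) / 3 := by rw [hlog]; ring
    _ ≤ S := by linarith

end LatticeSum

section Kernel

variable {γ m ν B x : ℝ}

lemma kernel_le_rpow_gamma (hν : 0 ≤ ν) (hB : 0 < B) (hx : 0 < x) :
    x ^ γ / (x ^ m + B ^ m) ^ ν ≤ B ^ (-(m * ν)) * x ^ γ := by
  rw [rpow_neg hB.le, rpow_mul hB.le, ← div_eq_inv_mul]
  gcongr
  exact le_add_of_nonneg_left (by positivity)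

lemma kernel_le_rpow_sub (hν : 0 ≤ ν) (hB : 0 ≤ B) (hx : 0 < x) :
    x ^ γ / (x ^ m + B ^ m) ^ ν ≤ x ^ (γ - m * ν) := by
  rw [rpow_sub hx, rpow_mul hx.le]
  gcongr
  exact le_add_of_nonneg_right (by positivity)

lemma le_kernel (hν : 0 ≤ ν) (hm : 0 ≤ m) (hB : 0 < B) (hx : 0 < x) (hxB : x ≤ B) :
    2 ^ (-ν) * (B ^ (-(m * ν)) * x ^ γ) ≤ x ^ γ / (x ^ m + B ^ m) ^ ν := by
  have hden : (x ^ m + B ^ m) ^ ν ≤ 2 ^ ν * (B ^ m) ^ ν := by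
    rw [← mul_rpow (by norm_num) (by positivity)]
    gcongr
    linarith [rpow_le_rpow hx.le hxB hm]
  rw [rpow_neg (by norm_num), rpow_neg hB.le, rpow_mul hB.le, le_div_iff₀ (by positivity)]
  calc (2 ^ ν)⁻¹ * (((B ^ m) ^ ν)⁻¹ * x ^ γ) * (x ^ m + B ^ m) ^ ν
      ≤ (2 ^ ν)⁻¹ * (((B ^ m) ^ ν)⁻¹ * x ^ γ) * (2 ^ ν * (B ^ m) ^ ν) := by gcongr
    _ = x ^ γ := by field_simp

end Kernel

theorem kernel_sum_bounds {γ m ν : ℝ} (hγ : -1 < γ) (hm : 1 ≤ m) (hν : γ - m * ν < -1) :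
    ∃ k K : ℝ, 0 < k ∧ k ≤ K ∧ ∀ (n : ℕ) (B : ℝ), 1 ≤ B → B ≤ (n : ℝ) ^ 2 →
      k * (B ^ (γ - m * ν + 1) * (1 + m * log (min B (n ^ 2 / B)))) ≤
        ∑ i ∈ Icc 1 n, ∑ j ∈ Icc 1 n, ((i : ℝ) * j) ^ γ / (((i : ℝ) * j) ^ m + B ^ m) ^ ν ∧
      ∑ i ∈ Icc 1 n, ∑ j ∈ Icc 1 n, ((i : ℝ) * j) ^ γ / (((i : ℝ) * j) ^ m + B ^ m) ^ ν ≤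
        K * (B ^ (γ - m * ν + 1) * (1 + m * log (min B (n ^ 2 / B)))) := by
  have hm0 : 0 < m := by linarith
  have hν0 : 0 ≤ ν := by nlinarith
  have hexp : γ - m * ν - γ = -(m * ν) := by ring
  set k := 2 ^ (-ν) * powSumLowerConst γ ^ 2 / 3
  set K := (powSumConst γ + powSumConst (γ - m * ν)) ^ 2
  have hk : 0 < k := by have := powSumLowerConst_pos hγ; positivity
  refine ⟨k / m, max K (k / m), div_pos hk hm0, le_max_right _ _, fun n B hB hBn => ?_⟩
  have hB0 : 0 < B := by linarith
  -- `Icc 1 n` and `Ioc 0 n` are definitionally equal over `ℕ`.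
  have hsum : ∑ i ∈ Icc 1 n, ∑ j ∈ Icc 1 n, ((i : ℝ) * j) ^ γ / (((i : ℝ) * j) ^ m + B ^ m) ^ ν
      = ∑ i ∈ Ioc 0 n, rowSum (fun x => x ^ γ / (x ^ m + B ^ m) ^ ν) n i := rfl
  have hf0 : ∀ x : ℝ, 0 ≤ x → 0 ≤ x ^ γ / (x ^ m + B ^ m) ^ ν := fun x hx => by positivity
  have hlow := le_sum_rowSum hγ (by positivity : (0 : ℝ) < 2 ^ (-ν)) hB hBn hf0
    fun x hx hxB => hexp ▸ le_kernel hν0 hm0.le hB0 hx hxB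
  have hup := sum_rowSum_le hγ hν hB hBn hf0 (fun x hx => hexp ▸ kernel_le_rpow_gamma hν0 hB0 hx)
    fun x hx => kernel_le_rpow_sub hν0 hB0.le hx
  rw [hsum]
  have hlog := log_nonneg (one_le_min_div hB hBn)
  have hX : 0 < B ^ (γ - m * ν + 1) := by positivity
  have hL : 1 + log (min B (n ^ 2 / B)) ≤ 1 + m * log (min B (n ^ 2 / B)) := by nlinarith
  constructor
  · calc k / m * (B ^ (γ - m * ν + 1) * (1 + m * log (min B (n ^ 2 / B))))
        ≤ k / m * (B ^ (γ - m * ν + 1) * (m * (1 + log (min B (n ^ 2 / B))))) := by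
          gcongr; nlinarith
      _ = k * B ^ (γ - m * ν + 1) * (1 + log (min B (n ^ 2 / B))) := by field_simp
      _ ≤ _ := hlow
  · calc _ ≤ K * B ^ (γ - m * ν + 1) * (1 + log (min B (n ^ 2 / B))) := hup
      _ ≤ max K (k / m) * (B ^ (γ - m * ν + 1) * (1 + m * log (min B (n ^ 2 / B)))) := by
          rw [mul_assoc]
          gcongr
          exact le_max_left _ _

lemma exists_rpow_eq_of_le {m A x : ℝ} (hm : 0 < m) (hA : 1 ≤ A) (hx : 0 ≤ x)
    (hAx : A ≤ x ^ (2 * m)) : ∃ B, 1 ≤ B ∧ B ≤ x ^ 2 ∧ A = B ^ m := by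
  refine ⟨A ^ m⁻¹, one_le_rpow hA (inv_nonneg.2 hm.le), ?_,
    (rpow_inv_rpow (by linarith) hm.ne').symm⟩
  calc A ^ m⁻¹ ≤ (x ^ (2 * m)) ^ m⁻¹ := rpow_le_rpow (by linarith) hAx (inv_nonneg.2 hm.le)
    _ = x ^ 2 := by
        rw [← rpow_mul hx, mul_inv_cancel_right₀ hm.ne']
        exact_mod_cast rpow_natCast x 2

lemma ite_log_rpow_eq {m B x : ℝ} (hm : 0 < m) (hB : 0 < B) (hx : 0 < x) :
    (if B ^ m ≤ x ^ m then 1 + log (B ^ m) else 1 + log (x ^ (2 * m) / B ^ m)) =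
      1 + m * log (min B (x ^ 2 / B)) := by
  rcases le_or_gt B x with h | h
  · rw [if_pos (rpow_le_rpow hB.le h hm.le), min_eq_left ((le_div_iff₀ hB).2 (by nlinarith)),
      log_rpow hB]
  · have hx2 : x ^ (2 * m) = (x ^ 2) ^ m := by
      rw [rpow_mul hx.le]; norm_cast
    rw [if_neg (not_le.2 (rpow_lt_rpow hx.le h hm)),
      min_eq_right ((div_le_iff₀ hB).2 (by nlinarith)), hx2, ← div_rpow (by positivity) hB.le,
      log_rpow (by positivity)]

/-- Tensor-product double sum comparison: for `γ > -1`, `m ≥ 1`, `γ - mν < -1`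
and any `l_n → ∞`, the double sum `Σ_i Σ_j (ij)^γ/((ij)^m + cn²)^ν` is of exact
order `(cn²)^{γ/m - ν + 1/m}(1 + log(cn²))` when `cn² ≤ n^m`, and of order
`(cn²)^{γ/m - ν + 1/m}(1 + log(n^{2m}/(cn²)))` when `cn² ≥ n^m`, uniformly
for `c ∈ [l_n/n², n^{2m-2}]`, for large `n`. -/
theorem double_sum_tensor_comparison
    (γ m ν : ℝ) (hγ : -1 < γ) (hm : 1 ≤ m) (hν : γ - m * ν < -1)
    (l : ℕ → ℝ) (hl : Filter.Tendsto l Filter.atTop Filter.atTop) :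
    ∃ k K : ℝ, 0 < k ∧ k ≤ K ∧ ∃ N : ℕ, ∀ n : ℕ, N ≤ n → ∀ c : ℝ,
      l n / (n : ℝ) ^ 2 ≤ c → c ≤ (n : ℝ) ^ (2 * m - 2) →
      (k * ((c * (n : ℝ) ^ 2) ^ (γ / m - ν + 1 / m) *
          (if c * (n : ℝ) ^ 2 ≤ (n : ℝ) ^ m then 1 + Real.log (c * (n : ℝ) ^ 2)
           else 1 + Real.log ((n : ℝ) ^ (2 * m) / (c * (n : ℝ) ^ 2)))) ≤
        (∑ i ∈ Finset.Icc 1 n, ∑ j ∈ Finset.Icc 1 n,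
          ((i : ℝ) * j) ^ γ / (((i : ℝ) * j) ^ m + c * (n : ℝ) ^ 2) ^ ν)) ∧
      ((∑ i ∈ Finset.Icc 1 n, ∑ j ∈ Finset.Icc 1 n,
          ((i : ℝ) * j) ^ γ / (((i : ℝ) * j) ^ m + c * (n : ℝ) ^ 2) ^ ν) ≤
        K * ((c * (n : ℝ) ^ 2) ^ (γ / m - ν + 1 / m) *
          (if c * (n : ℝ) ^ 2 ≤ (n : ℝ) ^ m then 1 + Real.log (c * (n : ℝ) ^ 2)
           else 1 + Real.log ((n : ℝ) ^ (2 * m) / (c * (n : ℝ) ^ 2))))) := by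
  have hm0 : 0 < m := by linarith
  obtain ⟨k, K, hk, hkK, hbounds⟩ := kernel_sum_bounds hγ hm hν
  obtain ⟨N, hN⟩ := Filter.eventually_atTop.1 (hl.eventually_ge_atTop 1)
  refine ⟨k, K, hk, hkK, max N 1, fun n hn c hc hc' => ?_⟩
  have hn0 : (0 : ℝ) < n := by exact_mod_cast (le_max_right N 1).trans hn
  have hA : 1 ≤ c * n ^ 2 :=
    (hN n ((le_max_left N 1).trans hn)).trans ((div_le_iff₀ (by positivity)).1 hc)
  have hAn : c * n ^ 2 ≤ (n : ℝ) ^ (2 * m) :=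
    calc c * n ^ 2 ≤ (n : ℝ) ^ (2 * m - 2) * (n : ℝ) ^ (2 : ℝ) := by
          rw [rpow_two]; gcongr
      _ = (n : ℝ) ^ (2 * m) := by rw [← rpow_add hn0]; ring_nf
  obtain ⟨B, hB, hBn, hAB⟩ := exists_rpow_eq_of_le hm0 hA hn0.le hAn
  have hB0 : 0 < B := by linarith
  have hexp : (B ^ m) ^ (γ / m - ν + 1 / m) = B ^ (γ - m * ν + 1) := by
    rw [← rpow_mul hB0.le]; congr 1; field_simp
  rw [hAB, hexp, ite_log_rpow_eq hm0 hB0 hn0]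
  exact hbounds n B hB hBn
end

section
/- Let U(c) = Σ_{j=1}^n a_j (cλ_j)^α/(1+cλ_j)^{α+β} U_j, where a_j ∈ ℝ, λ_j > 0, α, β ≥ 0 are integers, and U_j are independent mean-zero random variables with Var(U_j) ≤ σ². Suppose for some γ, δ ∈ {0,1,2} and a function g ≥ 0, Σ_j a_j² (sλ_j)^δ/(1+sλ_j)^γ ≤ g(s) for all s > 0. Then there is a constant C (depending only on α, β, σ²) such that Var(U(s) − U(t)) ≤ C (s−t)² g(s)/s² for all 0 < s < t. -/
/-!
By independence, `Var(U(s) - U(t)) = Σ_j e_j² Var U_j` with `e_j = a_j (w(sλ_j) - w(tλ_j))` and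
`w(x) = x^α / (1+x)^(α+β)`. Writing `w(x) = (x/(1+x))^α (1/(1+x))^β` as a product of powers of
two `[0, 1]`-valued maps whose increments are `|x - y| / ((1+x)(1+y))` gives
`|w(x) - w(y)| ≤ (α+β) |x - y| / ((1+x)(1+y))`. For `x = sλ_j ≤ y = tλ_j` this yields
`e_j² ≤ (α+β)² (t-s)²/s² · a_j² x²/(1+x)⁴`, and `x²/(1+x)⁴ ≤ x^δ/(1+x)^γ` once `γ, δ ≤ 2`.
-/

open MeasureTheory ProbabilityTheory Finset

namespace ProbabilityTheory.iIndepFun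

variable {Ω ι : Type*} [MeasurableSpace Ω] {μ : Measure Ω} [Fintype ι] {U : ι → Ω → ℝ}

theorem variance_sum_const_mul (hU : iIndepFun U μ) (hL2 : ∀ j, MemLp (U j) 2 μ) (c : ι → ℝ) :
    variance (fun ω => ∑ j, c j * U j ω) μ = ∑ j, c j ^ 2 * variance (U j) μ := by
  have hsum : (fun ω => ∑ j, c j * U j ω) = ∑ j, fun ω => c j * U j ω := by
    ext ω; rw [Finset.sum_apply]
  rw [hsum, IndepFun.variance_sum (fun j _ => (hL2 j).const_mul (c j)) fun i _ j _ hij =>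
    (hU.indepFun hij).comp (measurable_const_mul (c i)) (measurable_const_mul (c j))]
  simp only [variance_const_mul]

theorem variance_sum_const_mul_le (hU : iIndepFun U μ) (hL2 : ∀ j, MemLp (U j) 2 μ) {σ2 : ℝ}
    (hvar : ∀ j, variance (U j) μ ≤ σ2) (c : ι → ℝ) :
    variance (fun ω => ∑ j, c j * U j ω) μ ≤ σ2 * ∑ j, c j ^ 2 := by
  rw [hU.variance_sum_const_mul hL2, mul_sum]
  exact sum_le_sum fun j _ => by
    rw [mul_comm σ2]; exact mul_le_mul_of_nonneg_left (hvar j) (sq_nonneg _)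

end ProbabilityTheory.iIndepFun

noncomputable def filterWeight (α β : ℕ) (x : ℝ) : ℝ := x ^ α / (1 + x) ^ (α + β)

lemma filterWeight_eq_pow_mul_pow (α β : ℕ) (x : ℝ) :
    filterWeight α β x = (x / (1 + x)) ^ α * (1 / (1 + x)) ^ β := by
  rw [filterWeight, div_pow, div_pow, div_mul_div_comm, one_pow, mul_one, pow_add]

lemma abs_pow_sub_pow_le_of_abs_le_one (n : ℕ) {u p : ℝ} (hu : |u| ≤ 1) (hp : |p| ≤ 1) :
    |u ^ n - p ^ n| ≤ n * |u - p| := by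
  calc |u ^ n - p ^ n| ≤ |u - p| * n * max |u| |p| ^ (n - 1) := abs_pow_sub_pow_le ..
    _ ≤ |u - p| * n * 1 := by
        gcongr
        exact pow_le_one₀ (le_max_of_le_left (abs_nonneg u)) (max_le hu hp)
    _ = n * |u - p| := by ring

lemma abs_filterWeight_sub_le (α β : ℕ) {x y : ℝ} (hx : 0 ≤ x) (hy : 0 ≤ y) :
    |filterWeight α β x - filterWeight α β y| ≤ (α + β) * |x - y| / ((1 + x) * (1 + y)) := by
  have hbound : ∀ {z : ℝ}, 0 ≤ z → |z / (1 + z)| ≤ 1 ∧ |1 / (1 + z)| ≤ 1 := fun hz => by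
    refine ⟨?_, ?_⟩ <;> rw [abs_of_nonneg (by positivity), div_le_one (by positivity)] <;> linarith
  have hden : 0 < (1 + x) * (1 + y) := by positivity
  have hdiff₁ : |x / (1 + x) - y / (1 + y)| = |x - y| / ((1 + x) * (1 + y)) := by
    rw [div_sub_div _ _ (by positivity) (by positivity), abs_div, abs_of_pos hden]
    congr 2; ring
  have hdiff₂ : |1 / (1 + x) - 1 / (1 + y)| = |x - y| / ((1 + x) * (1 + y)) := by
    rw [div_sub_div _ _ (by positivity) (by positivity), abs_div, abs_of_pos hden, abs_sub_comm x]
    congr 2; ring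
  set u := x / (1 + x); set v := 1 / (1 + x); set p := y / (1 + y); set q := 1 / (1 + y)
  obtain ⟨hu, hv⟩ := hbound hx
  obtain ⟨hp, hq⟩ := hbound hy
  rw [filterWeight_eq_pow_mul_pow, filterWeight_eq_pow_mul_pow]
  calc |u ^ α * v ^ β - p ^ α * q ^ β|
        = |(u ^ α - p ^ α) * v ^ β + p ^ α * (v ^ β - q ^ β)| := by ring_nf
    _ ≤ |u ^ α - p ^ α| * |v| ^ β + |p| ^ α * |v ^ β - q ^ β| := by
        grw [abs_add_le, abs_mul, abs_mul, abs_pow, abs_pow]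
    _ ≤ α * |u - p| * 1 + 1 * (β * |v - q|) := by
        gcongr
        · exact abs_pow_sub_pow_le_of_abs_le_one α hu hp
        · exact pow_le_one₀ (abs_nonneg _) hv
        · exact pow_le_one₀ (abs_nonneg _) hp
        · exact abs_pow_sub_pow_le_of_abs_le_one β hv hq
    _ = (α + β) * |x - y| / ((1 + x) * (1 + y)) := by rw [hdiff₁, hdiff₂]; ring

lemma sq_div_one_add_pow_four_le {x : ℝ} (hx : 0 ≤ x) {γ δ : ℕ} (hγ : γ ≤ 2) (hδ : δ ≤ 2) :
    x ^ 2 / (1 + x) ^ 4 ≤ x ^ δ / (1 + x) ^ γ := by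
  have h1 : 1 ≤ 1 + x := by linarith
  rw [div_le_div_iff₀ (by positivity) (by positivity)]
  calc x ^ 2 * (1 + x) ^ γ = x ^ δ * x ^ (2 - δ) * (1 + x) ^ γ := by
        rw [← pow_add, Nat.add_sub_cancel' hδ]
    _ ≤ x ^ δ * (1 + x) ^ (2 - δ) * (1 + x) ^ γ := by gcongr; linarith
    _ = x ^ δ * (1 + x) ^ (2 - δ + γ) := by rw [mul_assoc, ← pow_add]
    _ ≤ x ^ δ * (1 + x) ^ 4 := by
        gcongr
        omega

lemma sq_filterWeight_sub_le (α β : ℕ) {γ δ : ℕ} (hγ : γ ≤ 2) (hδ : δ ≤ 2)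
    {s t l : ℝ} (hs : 0 < s) (hst : s ≤ t) (hl : 0 ≤ l) :
    (filterWeight α β (s * l) - filterWeight α β (t * l)) ^ 2
      ≤ (α + β) ^ 2 * (t - s) ^ 2 / s ^ 2 * ((s * l) ^ δ / (1 + s * l) ^ γ) := by
  have hx : 0 ≤ s * l := by positivity
  have hxy : s * l ≤ t * l := by gcongr
  have hweight := abs_filterWeight_sub_le α β hx (hx.trans hxy)
  rw [abs_sub_comm (s * l), abs_of_nonneg (sub_nonneg.2 hxy)] at hweight
  calc (filterWeight α β (s * l) - filterWeight α β (t * l)) ^ 2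
      ≤ ((α + β) * (t * l - s * l) / ((1 + s * l) * (1 + t * l))) ^ 2 := by
        rw [← sq_abs]; exact pow_le_pow_left₀ (abs_nonneg _) hweight 2
    _ ≤ ((α + β) * (t * l - s * l) / ((1 + s * l) * (1 + s * l))) ^ 2 := by
        gcongr
        have hy : 0 ≤ t * l := hx.trans hxy
        exact div_nonneg (mul_nonneg (by positivity) (sub_nonneg.2 hxy)) (by positivity)
    _ = (α + β) ^ 2 * (t - s) ^ 2 / s ^ 2 * ((s * l) ^ 2 / (1 + s * l) ^ 4) := by
        field_simp [hs.ne', (by positivity : (0:ℝ) < 1 + s * l).ne']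
    _ ≤ _ := by
        gcongr ?_ * ?_
        exact sq_div_one_add_pow_four_le hx hγ hδ

theorem variance_increment_bound_general
    {Ω : Type*} [MeasureSpace Ω] [IsProbabilityMeasure (ℙ : Measure Ω)]
    (n : ℕ) (a lam : Fin n → ℝ) (hlam : ∀ j, 0 < lam j)
    (α β : ℕ) (U : Fin n → Ω → ℝ)
    (hindep : iIndepFun U ℙ)
    (hL2 : ∀ j, MemLp (U j) 2 ℙ)
    (σ2 : ℝ) (hvar : ∀ j, variance (U j) ℙ ≤ σ2)
    (γ δ : ℕ) (hγ : γ ≤ 2) (hδ : δ ≤ 2) (g : ℝ → ℝ)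
    (hg : ∀ s : ℝ, 0 < s → ∑ j, (a j) ^ 2 * (s * lam j) ^ δ / (1 + s * lam j) ^ γ ≤ g s) :
    ∃ C : ℝ, 0 < C ∧ (∀ s t : ℝ, 0 < s → s < t →
      variance (fun ω =>
        (∑ j, a j * (s * lam j) ^ α / (1 + s * lam j) ^ (α + β) * U j ω) -
        (∑ j, a j * (t * lam j) ^ α / (1 + t * lam j) ^ (α + β) * U j ω)) ℙ ≤
      C * (s - t) ^ 2 * g s / s ^ 2) := by
  refine ⟨((α : ℝ) + β) ^ 2 * max σ2 0 + 1, by positivity, fun s t hs hst => ?_⟩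
  set e : Fin n → ℝ := fun j =>
    a j * (filterWeight α β (s * lam j) - filterWeight α β (t * lam j))
  have hincrement : (fun ω =>
      (∑ j, a j * (s * lam j) ^ α / (1 + s * lam j) ^ (α + β) * U j ω) -
      (∑ j, a j * (t * lam j) ^ α / (1 + t * lam j) ^ (α + β) * U j ω)) =
      fun ω => ∑ j, e j * U j ω := by
    ext ω
    simp only [e, filterWeight, ← sum_sub_distrib]
    exact sum_congr rfl fun j _ => by ring
  have hcoeff : ∑ j, e j ^ 2 ≤ (α + β) ^ 2 * (t - s) ^ 2 / s ^ 2 * g s := by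
    refine le_trans ?_ (mul_le_mul_of_nonneg_left (hg s hs) (by positivity))
    rw [mul_sum]
    refine sum_le_sum fun j _ => ?_
    have hweight := sq_filterWeight_sub_le α β hγ hδ hs hst.le (hlam j).le
    calc e j ^ 2
        = a j ^ 2 * (filterWeight α β (s * lam j) - filterWeight α β (t * lam j)) ^ 2 := by ring
      _ ≤ a j ^ 2 *
          ((α + β) ^ 2 * (t - s) ^ 2 / s ^ 2 * ((s * lam j) ^ δ / (1 + s * lam j) ^ γ)) := by
        gcongr
      _ = _ := by ring
  have hgs : 0 ≤ g s := (sum_nonneg fun j _ => by have := hlam j; positivity).trans (hg s hs)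
  calc _ = variance (fun ω => ∑ j, e j * U j ω) ℙ := by rw [hincrement]
    _ ≤ σ2 * ∑ j, e j ^ 2 := hindep.variance_sum_const_mul_le hL2 hvar e
    _ ≤ max σ2 0 * ((α + β) ^ 2 * (t - s) ^ 2 / s ^ 2 * g s) :=
        mul_le_mul (le_max_left _ _) hcoeff (sum_nonneg fun j _ => sq_nonneg _) (le_max_right _ _)
    _ = (α + β) ^ 2 * max σ2 0 * ((s - t) ^ 2 * g s / s ^ 2) := by ring
    _ ≤ ((α + β) ^ 2 * max σ2 0 + 1) * ((s - t) ^ 2 * g s / s ^ 2) :=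
        mul_le_mul_of_nonneg_right (by linarith)
          (div_nonneg (mul_nonneg (sq_nonneg _) hgs) (sq_nonneg _))
    _ = _ := by ring

/-- Variance increment bound for the linear process
`U(c) = Σ_j a_j (cλ_j)^α/(1+cλ_j)^{α+β} U_j` with independent mean-zero
variables `U_j` of variance at most `σ²`: if
`Σ_j a_j² (sλ_j)^δ/(1+sλ_j)^γ ≤ g(s)` for some `γ, δ ∈ {0,1,2}`, then
`Var(U(s) - U(t)) ≤ C (s-t)² g(s)/s²` for a constant `C` depending only on
`α, β, σ²`. -/
theorem variance_increment_bound
    {Ω : Type*} [MeasureSpace Ω] [IsProbabilityMeasure (ℙ : Measure Ω)]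
    (n : ℕ) (a lam : Fin n → ℝ) (hlam : ∀ j, 0 < lam j)
    (α β : ℕ) (U : Fin n → Ω → ℝ)
    (hmeas : ∀ j, Measurable (U j))
    (hindep : iIndepFun U ℙ)
    (hmean : ∀ j, ∫ ω, U j ω = 0)
    (hL2 : ∀ j, MemLp (U j) 2 ℙ)
    (σ2 : ℝ) (hvar : ∀ j, variance (U j) ℙ ≤ σ2)
    (γ δ : ℕ) (hγ : γ ≤ 2) (hδ : δ ≤ 2) (g : ℝ → ℝ) (hg0 : ∀ s, 0 ≤ g s)
    (hg : ∀ s : ℝ, 0 < s → ∑ j, (a j) ^ 2 * (s * lam j) ^ δ / (1 + s * lam j) ^ γ ≤ g s) :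
    ∃ C : ℝ, 0 < C ∧ (∀ s t : ℝ, 0 < s → s < t →
      variance (fun ω =>
        (∑ j, a j * (s * lam j) ^ α / (1 + s * lam j) ^ (α + β) * U j ω) -
        (∑ j, a j * (t * lam j) ^ α / (1 + t * lam j) ^ (α + β) * U j ω)) ℙ ≤
      C * (s - t) ^ 2 * g s / s ^ 2) :=
  variance_increment_bound_general n a lam hlam α β U hindep hL2 σ2 hvar γ δ hγ hδ g hg
end

section
/- Let n be a positive integer, n₊ = n + 1/2, and design points x_{i,n} = i/n₊ for i = 1,…,n. Define e_{j,n} ∈ ℝⁿ by (e_{j,n})_i = √(2/n₊)·sin((j−1/2)π x_{i,n}). Then e_{1,n},…,e_{n,n} form an orthonormal basis of ℝⁿ, and they are eigenvectors of the matrix U_n with entries (U_n)_{i,k} = min(x_{i,n}, x_{k,n}), with eigenvalues λ_{j,n} = 1/((4n+2) sin²((j−1/2)π/(2n+1))). -/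
/-!
With `α_j = (2j+1)π/(2n+1)` (the paper's `(j-1/2)π/n₊`, with `j` counted from 0), the vector
`i ↦ sin(α_j i)`, `i = 1, …, n`, vanishes at the ghost point `i = 0` and satisfies the reflection
`sin(α_j (n+1)) = sin(α_j n)`. Orthogonality reduces, by product-to-sum, to the identity
`∑_{i=1}^{m} cos(2πp i/(2m+1)) = -1/2` for `2m+1 ∤ p`. For the eigenvalues, `min(i, k)` is the
Green's function of the second difference with exactly these two boundary conditions, so the
min matrix is inverse to a tridiagonal matrix of which the sine vectors are eigenvectors with
eigenvalue `2 - 2cos α_j = 4 sin²(α_j/2)`.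
-/

open Real Finset Matrix

theorem two_mul_sin_half_mul_sum_range_cos (θ : ℝ) (m : ℕ) :
    2 * sin (θ / 2) * ∑ i ∈ range m, cos ((i + 1) * θ) =
      sin ((2 * m + 1) * (θ / 2)) - sin (θ / 2) := by
  induction m with
  | zero => simp
  | succ m ih =>
    rw [sum_range_succ, mul_add, ih, two_mul_sin_mul_cos,
      show θ / 2 - (m + 1) * θ = -((2 * m + 1) * (θ / 2)) by ring, sin_neg,
      show θ / 2 + (m + 1) * θ = (2 * (m + 1 : ℕ) + 1) * (θ / 2) by push_cast; ring]
    ring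

theorem sum_range_cos_two_pi_int_mul_div (m : ℕ) {p : ℤ} (hp : ¬ (2 * m + 1 : ℤ) ∣ p) :
    ∑ i ∈ range m, cos ((i + 1) * (2 * π * p / (2 * m + 1))) = -1 / 2 := by
  have hhalf : 2 * π * p / (2 * m + 1) / 2 = p * π / (2 * m + 1) := by ring
  have hsin : sin (p * π / (2 * m + 1)) ≠ 0 := by
    rw [Ne, sin_eq_zero_iff]
    rintro ⟨k, hk⟩
    refine hp ⟨k, ?_⟩
    have : (p : ℝ) = (2 * m + 1) * k := by
      field_simp at hk
      nlinarith [pi_pos]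
    exact_mod_cast this
  have h := two_mul_sin_half_mul_sum_range_cos (2 * π * p / (2 * m + 1)) m
  rw [hhalf, show (2 * m + 1) * (p * π / (2 * m + 1)) = p * π by field_simp, sin_int_mul_pi] at h
  apply mul_left_cancel₀ hsin
  linarith

noncomputable def oddFreq (n j : ℕ) : ℝ := (2 * j + 1) * π / (2 * n + 1)

noncomputable def gridSine (n : ℕ) (α : ℝ) : Fin n → ℝ := fun i => sin (α * (i + 1))

theorem gridSine_oddFreq_dotProduct {n j k : ℕ} (hj : j < n) (hk : k < n) :
    gridSine n (oddFreq n j) ⬝ᵥ gridSine n (oddFreq n k) =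
      if j = k then (2 * n + 1 : ℝ) / 4 else 0 := by
  have hprod (i : ℕ) : sin (oddFreq n j * (i + 1)) * sin (oddFreq n k * (i + 1)) =
      (cos ((i + 1) * (2 * π * ((j - k : ℤ) : ℝ) / (2 * n + 1)))
        - cos ((i + 1) * (2 * π * ((j + k + 1 : ℤ) : ℝ) / (2 * n + 1)))) / 2 := by
    rw [eq_div_iff two_ne_zero, mul_comm, ← mul_assoc, two_mul_sin_mul_sin]
    unfold oddFreq
    congr 2 <;> push_cast <;> ring
  have hndvd {p : ℤ} (hp : p ≠ 0) (hlt : |p| < 2 * n + 1) : ¬ (2 * n + 1 : ℤ) ∣ p :=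
    fun hdvd => hp (Int.eq_zero_of_abs_lt_dvd hdvd hlt)
  simp only [dotProduct, gridSine]
  rw [Fin.sum_univ_eq_sum_range
      (fun i => sin (oddFreq n j * (i + 1)) * sin (oddFreq n k * (i + 1))),
    sum_congr rfl fun i _ => hprod i, ← sum_div, sum_sub_distrib,
    sum_range_cos_two_pi_int_mul_div n (hndvd (p := j + k + 1) (by omega) (by rw [abs_lt]; omega))]
  split_ifs with hjk
  · subst hjk
    simp only [sub_self, Int.cast_zero, mul_zero, zero_div, cos_zero, sum_const, card_range,
      nsmul_eq_mul, mul_one]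
    ring
  · rw [sum_range_cos_two_pi_int_mul_div n (hndvd (p := j - k) (by omega) (by rw [abs_lt]; omega))]
    ring

/-- The corner entry `1` encodes the reflection `f (n + 1) = f n` at the right end. -/
noncomputable def secondDiffMatrix (n : ℕ) : Matrix (Fin n) (Fin n) ℝ := of fun i l =>
  if (i : ℕ) = l then (if (i : ℕ) + 1 = n then 1 else 2)
  else if (i : ℕ) + 1 = l ∨ (l : ℕ) + 1 = i then -1 else 0

theorem secondDiffMatrix_mulVec {n : ℕ} {f : ℕ → ℝ} (h0 : f 0 = 0) (hn : f (n + 1) = f n)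
    (i : Fin n) :
    (secondDiffMatrix n *ᵥ fun l => f (l + 1)) i = 2 * f (i + 1) - f (i + 2) - f i := by
  obtain ⟨i, hi⟩ := i
  have hterm (l : ℕ) : (if i = l then (if i + 1 = n then 1 else 2)
      else if i + 1 = l ∨ l + 1 = i then -1 else 0) * f (l + 1) =
      (if l = i then 2 * f (l + 1) else 0) - (if l = i + 1 then f (l + 1) else 0)
        - (if l + 1 = i then f (l + 1) else 0)
        - (if l = i then (if i + 1 = n then f (l + 1) else 0) else 0) := by
    split_ifs <;> first | omega | ring
  simp only [mulVec, dotProduct, secondDiffMatrix, of_apply]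
  rw [Fin.sum_univ_eq_sum_range (fun l => (if i = l then (if i + 1 = n then 1 else 2)
      else if i + 1 = l ∨ l + 1 = i then -1 else 0) * f (l + 1)), sum_congr rfl fun l _ => hterm l]
  have hprev : ∑ l ∈ range n, (if l + 1 = i then f (l + 1) else 0) = f i := by
    have := sum_range_succ' (fun m => if m = i then f m else 0) n
    simp only [sum_ite_eq', mem_range, Order.lt_add_one_iff, hi.le, ↓reduceIte, h0, ite_self,
      add_zero] at this
    exact this.symm
  simp only [sum_sub_distrib, sum_ite_eq', mem_range, hi, if_true, hprev]
  rcases (show i + 1 < n ∨ i + 1 = n by omega) with h | h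
  · simp only [h, ↓reduceIte, h.ne, sub_zero]
  · subst h
    simp only [lt_self_iff_false, ↓reduceIte, sub_zero, hn]
    ring

noncomputable def minMatrix (n : ℕ) : Matrix (Fin n) (Fin n) ℝ :=
  of fun i k => (min ((i : ℕ) + 1) ((k : ℕ) + 1) : ℕ)

theorem secondDiffMatrix_mul_minMatrix (n : ℕ) : secondDiffMatrix n * minMatrix n = 1 := by
  ext i k
  let f : ℕ → ℝ := fun m => (min m ((k : ℕ) + 1) : ℕ)
  have hcol : (secondDiffMatrix n * minMatrix n) i k =
      (secondDiffMatrix n *ᵥ fun l => f (l + 1)) i := rfl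
  rw [hcol, secondDiffMatrix_mulVec (by simp only [f, Nat.zero_min, Nat.cast_zero])
    (by simp only [f]; congr 1; omega), one_apply]
  simp only [Fin.ext_iff]
  have hmin : 2 * min ((i : ℕ) + 1) ((k : ℕ) + 1) =
      min ((i : ℕ) + 2) ((k : ℕ) + 1) + min (i : ℕ) ((k : ℕ) + 1) +
        if (i : ℕ) = k then 1 else 0 := by
    split_ifs <;> omega
  have hmin_real := congrArg (Nat.cast : ℕ → ℝ) hmin
  push_cast at hmin_real
  simp only [f]
  push_cast
  linarith

theorem secondDiffMatrix_mulVec_gridSine {n : ℕ} {α : ℝ} (h : sin (α * (n + 1)) = sin (α * n)) :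
    secondDiffMatrix n *ᵥ gridSine n α = (4 * sin (α / 2) ^ 2) • gridSine n α := by
  ext i
  have hrec :=
    secondDiffMatrix_mulVec (f := fun m => sin (α * m)) (by simp) (by push_cast; exact h) i
  have hv : (fun l : Fin n => sin (α * ((l + 1 : ℕ) : ℝ))) = gridSine n α := by
    ext l; simp [gridSine]
  rw [hv] at hrec
  rw [hrec, Pi.smul_apply, smul_eq_mul, gridSine, sin_sq_eq_half_sub, mul_div_cancel₀ α two_ne_zero]
  push_cast
  rw [show α * (i + 2) = α * (i + 1) + α by ring, show α * i = α * (i + 1) - α by ring,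
    sin_add, sin_sub]
  ring

theorem sin_oddFreq_mul_succ (n j : ℕ) : sin (oddFreq n j * (n + 1)) = sin (oddFreq n j * n) := by
  rw [show oddFreq n j * (n + 1) = π - oddFreq n j * n + j * (2 * π) by
    unfold oddFreq; field_simp; ring, sin_add_nat_mul_two_pi, sin_pi_sub]

theorem Matrix.mulVec_eq_inv_smul_of_mul_eq_one {ι K : Type*} [Fintype ι] [DecidableEq ι] [Field K]
    {A B : Matrix ι ι K} (hAB : A * B = 1) {v : ι → K} {μ : K} (hv : A *ᵥ v = μ • v) :
    B *ᵥ v = μ⁻¹ • v := by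
  have hv' : v = μ • B *ᵥ v := by
    rw [← mulVec_smul, ← hv, mulVec_mulVec, mul_eq_one_comm.mp hAB, one_mulVec]
  rcases eq_or_ne μ 0 with rfl | hμ
  · rw [zero_smul] at hv'
    rw [hv', mulVec_zero, smul_zero]
  · conv_rhs => rw [hv', smul_smul, inv_mul_cancel₀ hμ, one_smul]

theorem brownian_grid_eigendecomposition_general (n : ℕ) :
    let np : ℝ := n + 1 / 2
    let x : Fin n → ℝ := fun i => ((i : ℕ) + 1) / np
    let e : Fin n → Fin n → ℝ := fun j i =>
      Real.sqrt (2 / np) * Real.sin ((((j : ℕ) : ℝ) + 1 - 1 / 2) * Real.pi * x i)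
    let U : Matrix (Fin n) (Fin n) ℝ := fun i k => min (x i) (x k)
    let lam : Fin n → ℝ := fun j =>
      1 / ((4 * n + 2) * (Real.sin ((((j : ℕ) : ℝ) + 1 - 1 / 2) * Real.pi / (2 * n + 1))) ^ 2)
    (∀ j k, dotProduct (e j) (e k) = if j = k then 1 else 0) ∧
    (∀ j, U.mulVec (e j) = lam j • e j) := by
  intro np x e U lam
  have hnp : np = (2 * n + 1) / 2 := by ring
  have he (j : Fin n) : e j = √(4 / (2 * n + 1)) • gridSine n (oddFreq n j) := by
    ext i
    simp only [e, x, hnp, gridSine, oddFreq, Pi.smul_apply, smul_eq_mul]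
    congr 2 <;> field_simp <;> ring
  have hU : U = (2 / (2 * n + 1) : ℝ) • minMatrix n := by
    ext i k
    simp only [U, x, hnp, minMatrix, Matrix.smul_apply, of_apply, smul_eq_mul, Nat.cast_min]
    rw [min_div_div_right (by positivity)]
    push_cast
    field_simp
  have hlam (j : Fin n) : lam j = 2 / (2 * n + 1) * (4 * sin (oddFreq n j / 2) ^ 2)⁻¹ := by
    simp only [lam, oddFreq]
    rw [show (2 * (j : ℝ) + 1) * π / (2 * n + 1) / 2 =
        ((j : ℝ) + 1 - 1 / 2) * π / (2 * n + 1) by ring,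
      show (4 * n + 2 : ℝ) = 2 * (2 * n + 1) by ring]
    field_simp
    norm_num
  refine ⟨fun j k => ?_, fun j => ?_⟩
  · rw [he, he, smul_dotProduct, dotProduct_smul, gridSine_oddFreq_dotProduct j.isLt k.isLt]
    rw [smul_smul, mul_self_sqrt (by positivity), smul_eq_mul]
    simp only [Fin.ext_iff]
    split_ifs
    · field_simp
    · rw [mul_zero]
  · rw [he, hU, smul_mulVec, mulVec_smul,
      mulVec_eq_inv_smul_of_mul_eq_one (secondDiffMatrix_mul_minMatrix n)
        (secondDiffMatrix_mulVec_gridSine (sin_oddFreq_mul_succ n j)),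
      hlam, smul_smul, smul_smul, smul_smul]
    congr 1
    ring

/-- Exact eigendecomposition of the covariance matrix of Brownian motion on the
grid `x_{i,n} = i/(n+1/2)`: the discrete sine vectors form an orthonormal basis
of `ℝⁿ` and are eigenvectors of `(U_n)_{i,k} = min(x_i, x_k)` with eigenvalues
`λ_{j,n} = 1/((4n+2) sin²((j-1/2)π/(2n+1)))`. -/
theorem brownian_grid_eigendecomposition (n : ℕ) (hn : 0 < n) :
    let np : ℝ := n + 1 / 2
    let x : Fin n → ℝ := fun i => ((i : ℕ) + 1) / np
    let e : Fin n → Fin n → ℝ := fun j i =>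
      Real.sqrt (2 / np) * Real.sin ((((j : ℕ) : ℝ) + 1 - 1 / 2) * Real.pi * x i)
    let U : Matrix (Fin n) (Fin n) ℝ := fun i k => min (x i) (x k)
    let lam : Fin n → ℝ := fun j =>
      1 / ((4 * n + 2) * (Real.sin ((((j : ℕ) : ℝ) + 1 - 1 / 2) * Real.pi / (2 * n + 1))) ^ 2)
    (∀ j k, dotProduct (e j) (e k) = if j = k then 1 else 0) ∧
    (∀ j, U.mulVec (e j) = lam j • e j) :=
  brownian_grid_eigendecomposition_general n
end

section
/- Let α > 1/2 and f_j = j^{-1/2-α}. Fix n and define the aliased coefficients f̃_{i,n} = Σ_{l=0}^∞ (f_{(2n+1)l+i} − f_{(2n+1)l+2n+2−i}) for 1 ≤ i ≤ n. Then the defining series converges absolutely, every term is positive (so f̃_{i,n} > 0), and there exist constants c₁, c₂ > 0 independent of n and i such that f̃_{i,n} ≤ c₁ (i^{-1/2-α} + n^{-1/2-α}) for all 1 ≤ i ≤ n, and f̃_{i,n} ≥ c₂ i^{-1/2-α} whenever i ≤ n/2. -/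
set_option maxHeartbeats 1000000 in

/-- Aliasing of the sequence `f_j = j^{-1/2-α}` with `α > 1/2`: the aliased
coefficients `f̃_{i,n} = Σ_{l=0}^∞ (f_{(2n+1)l+i} - f_{(2n+1)l+2n+2-i})` are well
defined (the series converges absolutely), have positive terms, and satisfy
`f̃_{i,n} ≤ c₁ (i^{-1/2-α} + n^{-1/2-α})` for all `1 ≤ i ≤ n` and
`f̃_{i,n} ≥ c₂ i^{-1/2-α}` for `i ≤ n/2`, with `c₁, c₂ > 0` independent of `n, i`. -/
theorem aliased_power_sequence (α : ℝ) (hα : 1 / 2 < α) :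
    ∃ c₁ : ℝ, 0 < c₁ ∧ ∃ c₂ : ℝ, 0 < c₂ ∧
      ∀ n : ℕ, 0 < n → ∀ i : ℕ, 1 ≤ i → i ≤ n →
        (Summable (fun l : ℕ =>
          |(((2 * n + 1) * l + i : ℕ) : ℝ) ^ (-(1 / 2 : ℝ) - α) -
            (((2 * n + 1) * l + 2 * n + 2 - i : ℕ) : ℝ) ^ (-(1 / 2 : ℝ) - α)|)) ∧
        (∀ l : ℕ,
          0 < (((2 * n + 1) * l + i : ℕ) : ℝ) ^ (-(1 / 2 : ℝ) - α) -
            (((2 * n + 1) * l + 2 * n + 2 - i : ℕ) : ℝ) ^ (-(1 / 2 : ℝ) - α)) ∧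
        (0 < ∑' l : ℕ,
          ((((2 * n + 1) * l + i : ℕ) : ℝ) ^ (-(1 / 2 : ℝ) - α) -
            (((2 * n + 1) * l + 2 * n + 2 - i : ℕ) : ℝ) ^ (-(1 / 2 : ℝ) - α))) ∧
        ((∑' l : ℕ,
          ((((2 * n + 1) * l + i : ℕ) : ℝ) ^ (-(1 / 2 : ℝ) - α) -
            (((2 * n + 1) * l + 2 * n + 2 - i : ℕ) : ℝ) ^ (-(1 / 2 : ℝ) - α))) ≤
          c₁ * ((i : ℝ) ^ (-(1 / 2 : ℝ) - α) + (n : ℝ) ^ (-(1 / 2 : ℝ) - α))) ∧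
        (2 * i ≤ n →
          c₂ * (i : ℝ) ^ (-(1 / 2 : ℝ) - α) ≤
            ∑' l : ℕ,
              ((((2 * n + 1) * l + i : ℕ) : ℝ) ^ (-(1 / 2 : ℝ) - α) -
                (((2 * n + 1) * l + 2 * n + 2 - i : ℕ) : ℝ) ^ (-(1 / 2 : ℝ) - α))) := by
  set p : ℝ := -(1 / 2 : ℝ) - α with hp_def
  have hp : p < -1 := by rw [hp_def]; linarith
  have hp0 : p < 0 := by linarith
  -- the comparison series
  have hS : Summable (fun l : ℕ => ((l : ℝ) + 1) ^ p) := by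
    have h := (Real.summable_nat_rpow (p := p)).mpr hp
    have h2 := (summable_nat_add_iff 1).mpr h
    refine h2.congr fun l => ?_
    push_cast
    ring_nf
  set S : ℝ := ∑' l : ℕ, ((l : ℝ) + 1) ^ p with hS_def
  have hS0 : 0 ≤ S :=
    tsum_nonneg fun l => Real.rpow_nonneg (by positivity) p
  have h2p : (2 : ℝ) ^ p < 1 :=
    Real.rpow_lt_one_of_one_lt_of_neg (by norm_num) hp0
  refine ⟨1 + S, by linarith, 1 - (2 : ℝ) ^ p, by linarith, ?_⟩
  intro n hn i hi1 hin
  -- basic facts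
  have hcastB : ∀ l : ℕ, (((2 * n + 1) * l + 2 * n + 2 - i : ℕ) : ℝ)
      = ((2 * n + 1) * l + 2 * n + 2 : ℕ) - (i : ℝ) := by
    intro l
    have : i ≤ (2 * n + 1) * l + 2 * n + 2 := by nlinarith
    push_cast [Nat.cast_sub this]
    ring
  have hApos : ∀ l : ℕ, (0 : ℝ) < (((2 * n + 1) * l + i : ℕ) : ℝ) := by
    intro l
    have : 1 ≤ (2 * n + 1) * l + i := by omega
    exact_mod_cast Nat.lt_of_lt_of_le Nat.zero_lt_one this
  have hAB : ∀ l : ℕ, (((2 * n + 1) * l + i : ℕ) : ℝ)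
      < (((2 * n + 1) * l + 2 * n + 2 - i : ℕ) : ℝ) := by
    intro l
    have : (2 * n + 1) * l + i < (2 * n + 1) * l + 2 * n + 2 - i := by omega
    exact_mod_cast this
  have hterm : ∀ l : ℕ,
      0 < (((2 * n + 1) * l + i : ℕ) : ℝ) ^ p -
        (((2 * n + 1) * l + 2 * n + 2 - i : ℕ) : ℝ) ^ p := by
    intro l
    have := Real.rpow_lt_rpow_of_neg (hApos l) (hAB l) hp0
    linarith
  -- comparison bound for the positive part
  have hgle : ∀ l : ℕ, (((2 * n + 1) * l + i : ℕ) : ℝ) ^ p ≤ ((l : ℝ) + 1) ^ p := by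
    intro l
    apply Real.rpow_le_rpow_of_nonpos (by positivity)
    · have : l + 1 ≤ (2 * n + 1) * l + i := by nlinarith
      calc ((l : ℝ) + 1) = ((l + 1 : ℕ) : ℝ) := by push_cast; ring
        _ ≤ _ := by exact_mod_cast this
    · exact hp0.le
  have hsumg : Summable (fun l : ℕ => (((2 * n + 1) * l + i : ℕ) : ℝ) ^ p) :=
    Summable.of_nonneg_of_le (fun l => Real.rpow_nonneg (hApos l).le p) hgle hS
  have hBnonneg : ∀ l : ℕ,
      0 ≤ (((2 * n + 1) * l + 2 * n + 2 - i : ℕ) : ℝ) ^ p := fun l =>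
    Real.rpow_nonneg (by positivity) p
  have hsum : Summable (fun l : ℕ =>
      (((2 * n + 1) * l + i : ℕ) : ℝ) ^ p -
        (((2 * n + 1) * l + 2 * n + 2 - i : ℕ) : ℝ) ^ p) := by
    apply Summable.of_nonneg_of_le (fun l => (hterm l).le)
      (fun l => ?_) hsumg
    have := hBnonneg l
    linarith
  have hsumabs : Summable (fun l : ℕ =>
      |(((2 * n + 1) * l + i : ℕ) : ℝ) ^ p -
        (((2 * n + 1) * l + 2 * n + 2 - i : ℕ) : ℝ) ^ p|) := by
    refine hsum.congr fun l => ?_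
    rw [abs_of_pos (hterm l)]
  have htsumpos : 0 < ∑' l : ℕ,
      ((((2 * n + 1) * l + i : ℕ) : ℝ) ^ p -
        (((2 * n + 1) * l + 2 * n + 2 - i : ℕ) : ℝ) ^ p) :=
    Summable.tsum_pos hsum (fun l => (hterm l).le) 0 (hterm 0)
  refine ⟨hsumabs, hterm, htsumpos, ?_, ?_⟩
  · -- upper bound
    have h1 : (∑' l : ℕ,
        ((((2 * n + 1) * l + i : ℕ) : ℝ) ^ p -
          (((2 * n + 1) * l + 2 * n + 2 - i : ℕ) : ℝ) ^ p))
        ≤ ∑' l : ℕ, (((2 * n + 1) * l + i : ℕ) : ℝ) ^ p := by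
      refine Summable.tsum_le_tsum (fun l => ?_) hsum hsumg
      have := hBnonneg l
      linarith
    have h2 : (∑' l : ℕ, (((2 * n + 1) * l + i : ℕ) : ℝ) ^ p)
        = (((2 * n + 1) * 0 + i : ℕ) : ℝ) ^ p
          + ∑' l : ℕ, (((2 * n + 1) * (l + 1) + i : ℕ) : ℝ) ^ p :=
      Summable.tsum_eq_zero_add hsumg
    have h3 : (((2 * n + 1) * 0 + i : ℕ) : ℝ) ^ p = (i : ℝ) ^ p := by norm_num
    have hnpos : (0 : ℝ) < (n : ℝ) := by exact_mod_cast hn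
    have h4 : (∑' l : ℕ, (((2 * n + 1) * (l + 1) + i : ℕ) : ℝ) ^ p)
        ≤ ∑' l : ℕ, (n : ℝ) ^ p * ((l : ℝ) + 1) ^ p := by
      refine Summable.tsum_le_tsum (fun l => ?_) ?_ (hS.mul_left _)
      · have hb : (n : ℝ) * ((l : ℝ) + 1) ≤ (((2 * n + 1) * (l + 1) + i : ℕ) : ℝ) := by
          have : n * (l + 1) ≤ (2 * n + 1) * (l + 1) + i := by nlinarith
          calc (n : ℝ) * ((l : ℝ) + 1) = ((n * (l + 1) : ℕ) : ℝ) := by push_cast; ring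
            _ ≤ _ := by exact_mod_cast this
        have hpos : (0 : ℝ) < (n : ℝ) * ((l : ℝ) + 1) := by positivity
        calc (((2 * n + 1) * (l + 1) + i : ℕ) : ℝ) ^ p
            ≤ ((n : ℝ) * ((l : ℝ) + 1)) ^ p :=
              Real.rpow_le_rpow_of_nonpos hpos hb hp0.le
          _ = (n : ℝ) ^ p * ((l : ℝ) + 1) ^ p :=
              Real.mul_rpow hnpos.le (by positivity)
      · exact (summable_nat_add_iff
          (f := fun l : ℕ => (((2 * n + 1) * l + i : ℕ) : ℝ) ^ p) 1).mpr hsumg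
    have h5 : (∑' l : ℕ, (n : ℝ) ^ p * ((l : ℝ) + 1) ^ p) = (n : ℝ) ^ p * S := by
      rw [hS_def, tsum_mul_left]
    have hip : 0 ≤ (i : ℝ) ^ p := Real.rpow_nonneg (by positivity) p
    have hnp : 0 ≤ (n : ℝ) ^ p := Real.rpow_nonneg hnpos.le p
    rw [h3] at h2
    nlinarith [h1, h2, h4, h5]
  · -- lower bound
    intro h2i
    have h0 : (((2 * n + 1) * 0 + i : ℕ) : ℝ) ^ p -
        (((2 * n + 1) * 0 + 2 * n + 2 - i : ℕ) : ℝ) ^ p ≤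
        ∑' l : ℕ, ((((2 * n + 1) * l + i : ℕ) : ℝ) ^ p -
          (((2 * n + 1) * l + 2 * n + 2 - i : ℕ) : ℝ) ^ p) :=
      Summable.le_tsum hsum 0 fun l _ => (hterm l).le
    have hipos : (0 : ℝ) < (i : ℝ) := by exact_mod_cast hi1
    have hb : (2 : ℝ) * (i : ℝ) ≤ (((2 * n + 1) * 0 + 2 * n + 2 - i : ℕ) : ℝ) := by
      have : 2 * i ≤ (2 * n + 1) * 0 + 2 * n + 2 - i := by omega
      calc (2 : ℝ) * (i : ℝ) = ((2 * i : ℕ) : ℝ) := by push_cast; ring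
        _ ≤ _ := by exact_mod_cast this
    have hBle : (((2 * n + 1) * 0 + 2 * n + 2 - i : ℕ) : ℝ) ^ p
        ≤ ((2 : ℝ) * (i : ℝ)) ^ p :=
      Real.rpow_le_rpow_of_nonpos (by positivity) hb hp0.le
    have hmul : ((2 : ℝ) * (i : ℝ)) ^ p = (2 : ℝ) ^ p * (i : ℝ) ^ p :=
      Real.mul_rpow (by norm_num) hipos.le
    have h3 : (((2 * n + 1) * 0 + i : ℕ) : ℝ) ^ p = (i : ℝ) ^ p := by norm_num
    rw [hmul] at hBle
    nlinarith [h0, hBle]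
end
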